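/- arXiv:2212.03632 — 6 statements merged into one kernel-verified Lean document; each statement's English description precedes it below -/
import Mathlib

section
/- Let (Ω, 𝓕, P) be a probability space, (𝓕_t)_{t ≥ 0} a filtration on Ω, S a measurable space, and Z : [0,∞) × Ω → S a progressively measurable process adapted to (𝓕_t). For each t ≥ 0 let P_t be a Markov kernel on S, and write (P_t f)(z) = ∫ f(y) P_t(z, dy). Assume: (i) the Markov property: for all s, t ≥ 0 and all bounded measurable f : S → ℝ, E[f(Z_{s+t}) | 𝓕_s] = (P_t f)(Z_s) P-almost surely; (ii) τ : Ω → [0,∞) is a stopping time with respect to (𝓕_t) with E[τ] < ∞; and (iii) for every t ≥ 0 and every bounded measurable f : S → ℝ, E[∫₀ᵗ f(Z_{τ+s}) ds] = E[∫₀ᵗ f(Z_s) ds]. Define the finite measure μ on S by μ(A) = E[∫₀^τ 1_A(Z_s) ds] (equivalently, μ is the pushforward under (s, ω) ↦ Z_s(ω) of the restriction of the product of Lebesgue measure and P to {(s, ω) : s < τ(ω)}). Then μ is invariant for each P_t: for every t ≥ 0 and every bounded measurable f : S → ℝ, ∫ (P_t f) dμ = ∫ f dμ. In particular, if E[τ]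 > 0 then μ / μ(S) is a stationary probability measure for the semigroup (P_t). -/
open MeasureTheory ProbabilityTheory Set

/-! By Fubini, `∫ g dμ = ∫₀^∞ E[1_{s<τ} g(Z_s)] ds`. For `g = P_t f` the event `{s < τ}` lies in
`ℱ_s`, so the Markov property turns the integrand into `E[1_{s<τ} f(Z_{s+t})]`, i.e.
`∫ P_t f dμ = E[∫₀^τ f(Z_{s+t}) ds]`. Pathwise,
`∫₀^τ f(Z_{s+t}) ds - ∫₀^τ f(Z_s) ds = ∫₀^t f(Z_{τ+s}) ds - ∫₀^t f(Z_s) ds`,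
and the expectation of the right-hand side vanishes by the shift invariance at `τ`. -/

section BoundedFunctions

variable {α β : Type*} [MeasurableSpace α] [MeasurableSpace β] {f : β → ℝ}

lemma integrable_comp_of_abs_le {μ : Measure α} [IsFiniteMeasure μ] (hf : Measurable f)
    (hfb : ∃ C, ∀ y, |f y| ≤ C) {h : α → β} (hh : Measurable h) :
    Integrable (fun x => f (h x)) μ :=
  let ⟨C, hC⟩ := hfb
  .of_bound (hf.comp hh).aestronglyMeasurable C (ae_of_all _ fun x => hC (h x))

lemma intervalIntegrable_comp_of_abs_le (hf : Measurable f) (hfb : ∃ C, ∀ y, |f y| ≤ C)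
    {h : ℝ → β} (hh : Measurable h) (a b : ℝ) : IntervalIntegrable (fun s => f (h s)) volume a b :=
  ⟨integrable_comp_of_abs_le hf hfb hh, integrable_comp_of_abs_le hf hfb hh⟩

lemma integrable_intervalIntegral_comp_of_abs_le {P : Measure α} [IsFiniteMeasure P]
    (hf : Measurable f) (hfb : ∃ C, ∀ y, |f y| ≤ C) {G : ℝ × α → β} (hG : Measurable G)
    (a b : ℝ) : Integrable (fun x => ∫ s in a..b, f (G (s, x))) P := by
  obtain ⟨C, hC⟩ := hfb
  have hfG := (hf.comp hG).stronglyMeasurable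
  refine .of_bound ?_ (C * |b - a|) (ae_of_all _ fun x => ?_)
  -- `∫ s in a..b` is by definition `∫ s in Ioc a b` minus `∫ s in Ioc b a`
  · exact ((hfG.integral_prod_left' (μ := volume.restrict (Ioc a b))).sub
      (hfG.integral_prod_left' (μ := volume.restrict (Ioc b a)))).aestronglyMeasurable
  · exact intervalIntegral.norm_integral_le_of_norm_le_const fun s _ => hC (G (s, x))

lemma ProbabilityTheory.Kernel.exists_abs_integral_le_of_abs_le (κ : Kernel α β) [IsMarkovKernel κ]
    (hfb : ∃ C, ∀ y, |f y| ≤ C) : ∃ C, ∀ x, |∫ y, f y ∂(κ x)| ≤ C :=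
  hfb.imp fun C hC x => by
    simpa using norm_integral_le_of_norm_le_const (μ := κ x)
      (ae_of_all _ fun y => (Real.norm_eq_abs (f y)).trans_le (hC y))

end BoundedFunctions

theorem ProbabilityTheory.Kernel.invariant_of_integral_eq {α : Type*} [MeasurableSpace α]
    {κ : Kernel α α} [IsMarkovKernel κ] {μ : Measure α} [IsFiniteMeasure μ]
    (h : ∀ f : α → ℝ, Measurable f → (∃ C, ∀ y, |f y| ≤ C) →
      ∫ x, (∫ y, f y ∂(κ x)) ∂μ = ∫ x, f x ∂μ) :
    κ.Invariant μ := by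
  ext A hA
  have hA_bounded : ∃ C, ∀ y, |A.indicator (1 : α → ℝ) y| ≤ C :=
    ⟨1, fun y => by by_cases hy : y ∈ A <;> simp [hy]⟩
  have hreal := h _ (measurable_one.indicator hA) hA_bounded
  simp only [integral_indicator_one hA] at hreal
  have hfin : ∫⁻ x, κ x A ∂μ ≠ ⊤ :=
    ((lintegral_mono fun _ => prob_le_one).trans_lt (by simp [measure_lt_top])).ne
  rw [Measure.bind_apply hA κ.aemeasurable,
    ← ENNReal.toReal_eq_toReal_iff' hfin (measure_ne_top μ A),
    ← integral_toReal (κ.measurable_coe hA).aemeasurable (ae_of_all _ fun _ => measure_lt_top _ _)]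
  exact hreal

theorem intervalIntegral.integral_comp_add_right_sub_eq {φ : ℝ → ℝ}
    (hφ : ∀ a b, IntervalIntegrable φ volume a b) (a t : ℝ) :
    (∫ s in 0..a, φ (s + t)) - ∫ s in 0..a, φ s = (∫ s in 0..t, φ (a + s)) - ∫ s in 0..t, φ s := by
  rw [intervalIntegral.integral_comp_add_right φ, intervalIntegral.integral_comp_add_left φ,
    zero_add, add_zero, add_comm a t]
  exact intervalIntegral.integral_interval_sub_interval_comm' (hφ _ _) (hφ _ _) (hφ _ _)

theorem measurable_uncurry_of_progressive {Ω S : Type*} {m0 : MeasurableSpace Ω}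
    [MeasurableSpace S] (ℱ : Filtration ℝ m0) {Z : ℝ → Ω → S}
    (hprog : ∀ t : ℝ,
      Measurable[MeasurableSpace.prod
          (inferInstanceAs (MeasurableSpace (Set.Iic t))) (ℱ t)]
        (fun p : Set.Iic t × Ω => Z (p.1 : ℝ) p.2)) :
    Measurable (fun p : ℝ × Ω => Z p.1 p.2) := by
  intro A hA
  have hclip : ∀ n : ℕ, Measurable (fun p : ℝ × Ω => Z (min p.1 n) p.2) := fun n =>
    (hprog n).comp
      (f := fun p : ℝ × Ω => ((⟨min p.1 n, mem_Iic.2 (min_le_right _ _)⟩ : Iic (n : ℝ)), p.2))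
      ((measurable_fst.min measurable_const).subtype_mk.prodMk
        (measurable_snd.mono le_rfl (ℱ.le n)))
  have hcover : (fun p : ℝ × Ω => Z p.1 p.2) ⁻¹' A =
      ⋃ n : ℕ, (fun p : ℝ × Ω => Z (min p.1 n) p.2) ⁻¹' A ∩ {p | p.1 ≤ n} := by
    ext p
    simp only [mem_preimage, mem_iUnion, mem_inter_iff, mem_ofPred_eq]
    constructor
    · intro hp
      obtain ⟨n, hn⟩ := exists_nat_ge p.1
      exact ⟨n, by rwa [min_eq_left hn], hn⟩
    · rintro ⟨n, hp, hn⟩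
      rwa [min_eq_left hn] at hp
  rw [hcover]
  exact .iUnion fun n => (hclip n hA).inter (measurableSet_le measurable_fst measurable_const)

theorem MeasureTheory.IsStoppingTime.measurable_of_coe {Ω : Type*} {m0 : MeasurableSpace Ω}
    {ℱ : Filtration ℝ m0} {τ : Ω → ℝ} (hτ : IsStoppingTime ℱ (fun ω => (τ ω : WithTop ℝ))) :
    Measurable τ :=
  measurable_of_Ioi fun s => ℱ.le s _ <| by
    have hgt := hτ.measurableSet_gt s
    simp only [WithTop.coe_lt_coe] at hgt
    exact hgt

section SectionIntegral

variable {α β E : Type*} [MeasurableSpace α] [MeasurableSpace β] [NormedAddCommGroup E]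
  [NormedSpace ℝ E] {μ : Measure α} {ν : Measure β} [SFinite μ] [SFinite ν]
  {R : Set (α × β)} {F : α × β → E}

theorem setIntegral_prod_eq_integral_setIntegral_sections (hR : MeasurableSet R)
    (hF : IntegrableOn F R (μ.prod ν)) :
    ∫ p in R, F p ∂μ.prod ν = ∫ x, ∫ y in Prod.mk x ⁻¹' R, F (x, y) ∂ν ∂μ := by
  rw [← integral_indicator hR, integral_prod _ ((integrable_indicator_iff hR).2 hF)]
  exact integral_congr_ae (ae_of_all _ fun x => integral_indicator (measurable_prodMk_left hR))

theorem setIntegral_prod_eq_integral_setIntegral_sections_symm (hR : MeasurableSet R)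
    (hF : IntegrableOn F R (μ.prod ν)) :
    ∫ p in R, F p ∂μ.prod ν = ∫ y, ∫ x in (fun x => (x, y)) ⁻¹' R, F (x, y) ∂μ ∂ν := by
  rw [← integral_indicator hR, integral_prod_symm _ ((integrable_indicator_iff hR).2 hF)]
  exact integral_congr_ae (ae_of_all _ fun y => integral_indicator (measurable_prodMk_right hR))

end SectionIntegral

section OccupationRegion

variable {Ω S : Type*} {m0 : MeasurableSpace Ω} [MeasurableSpace S] {P : Measure Ω} {τ : Ω → ℝ}

def occupationRegion (τ : Ω → ℝ) : Set (ℝ × Ω) := {p | 0 ≤ p.1 ∧ p.1 < τ p.2}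

lemma measurableSet_occupationRegion (hτ : Measurable τ) : MeasurableSet (occupationRegion τ) :=
  (measurableSet_le measurable_const measurable_fst).inter
    (measurableSet_lt measurable_fst (hτ.comp measurable_snd))

lemma volume_prod_occupationRegion [SFinite P] (hτ : Measurable τ) (hτ0 : ∀ ω, 0 ≤ τ ω)
    (hτint : Integrable τ P) :
    volume.prod P (occupationRegion τ) = ENNReal.ofReal (∫ ω, τ ω ∂P) := by
  rw [Measure.prod_apply_symm (measurableSet_occupationRegion hτ),
    ofReal_integral_eq_lintegral_ofReal hτint (ae_of_all _ hτ0)]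
  refine lintegral_congr fun ω => ?_
  rw [show (fun s => (s, ω)) ⁻¹' occupationRegion τ = Ico 0 (τ ω) from rfl, Real.volume_Ico,
    sub_zero]

theorem setIntegral_occupationRegion_eq_integral_intervalIntegral [SFinite P]
    (hτ : Measurable τ) (hτ0 : ∀ ω, 0 ≤ τ ω) {F : ℝ × Ω → ℝ}
    (hF : IntegrableOn F (occupationRegion τ) (volume.prod P)) :
    ∫ p in occupationRegion τ, F p ∂volume.prod P = ∫ ω, (∫ s in 0..τ ω, F (s, ω)) ∂P := by
  rw [setIntegral_prod_eq_integral_setIntegral_sections_symm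
    (measurableSet_occupationRegion hτ) hF]
  exact integral_congr_ae (ae_of_all _ fun ω =>
    (setIntegral_congr_set Ico_ae_eq_Ioc).trans (intervalIntegral.integral_of_le (hτ0 ω)).symm)

variable [IsFiniteMeasure P] [IsFiniteMeasure ((volume.prod P).restrict (occupationRegion τ))]
  {Z : ℝ → Ω → S} {f : S → ℝ} {t : ℝ}

theorem setIntegral_occupationRegion_kernel_eq {ℱ : Filtration ℝ m0}
    (hτ : IsStoppingTime ℱ (fun ω => (τ ω : WithTop ℝ)))
    (hZ : Measurable (fun p : ℝ × Ω => Z p.1 p.2)) (κ : Kernel S S) [IsMarkovKernel κ]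
    (hf : Measurable f) (hfb : ∃ C, ∀ y, |f y| ≤ C)
    (hMarkov : ∀ s, 0 ≤ s →
      P[(fun ω => f (Z (s + t) ω)) | ℱ s] =ᵐ[P] fun ω => ∫ y, f y ∂(κ (Z s ω))) :
    ∫ p in occupationRegion τ, ∫ y, f y ∂(κ (Z p.1 p.2)) ∂volume.prod P
      = ∫ p in occupationRegion τ, f (Z (p.1 + t) p.2) ∂volume.prod P := by
  have hR := measurableSet_occupationRegion hτ.measurable_of_coe
  have hg : Measurable fun z => ∫ y, f y ∂(κ z) := hf.stronglyMeasurable.integral_kernel.measurable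
  have hmarkovian : IntegrableOn (fun p : ℝ × Ω => ∫ y, f y ∂(κ (Z p.1 p.2)))
      (occupationRegion τ) (volume.prod P) :=
    integrable_comp_of_abs_le hg (κ.exists_abs_integral_le_of_abs_le hfb) hZ
  have hshifted : IntegrableOn (fun p : ℝ × Ω => f (Z (p.1 + t) p.2))
      (occupationRegion τ) (volume.prod P) :=
    integrable_comp_of_abs_le hf hfb (hZ.comp ((measurable_fst.add_const t).prodMk measurable_snd))
  rw [setIntegral_prod_eq_integral_setIntegral_sections hR hmarkovian,
    setIntegral_prod_eq_integral_setIntegral_sections hR hshifted]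
  refine integral_congr_ae (ae_of_all _ fun s => ?_)
  rcases lt_or_ge s 0 with hs | hs
  · have hempty : Prod.mk s ⁻¹' occupationRegion τ = ∅ :=
      eq_empty_of_forall_notMem fun ω hω => hω.1.not_gt hs
    simp only [hempty, Measure.restrict_empty, integral_zero_measure]
  · have hsection : Prod.mk s ⁻¹' occupationRegion τ = {ω | (s : WithTop ℝ) < τ ω} := by
      ext ω
      simp [occupationRegion, hs]
    have hℱ : MeasurableSet[ℱ s] (Prod.mk s ⁻¹' occupationRegion τ) :=
      hsection ▸ hτ.measurableSet_gt s
    calc ∫ ω in Prod.mk s ⁻¹' occupationRegion τ, ∫ y, f y ∂(κ (Z s ω)) ∂P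
        = ∫ ω in Prod.mk s ⁻¹' occupationRegion τ, P[(fun ω => f (Z (s + t) ω)) | ℱ s] ω ∂P :=
          setIntegral_congr_ae (hR.preimage measurable_prodMk_left)
            ((hMarkov s hs).mono fun ω h _ => h.symm)
      _ = ∫ ω in Prod.mk s ⁻¹' occupationRegion τ, f (Z (s + t) ω) ∂P :=
          setIntegral_condExp (ℱ.le s)
            (integrable_comp_of_abs_le hf hfb (hZ.comp measurable_prodMk_left)) hℱ

theorem setIntegral_occupationRegion_comp_add_eq (hτ : Measurable τ) (hτ0 : ∀ ω, 0 ≤ τ ω)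
    (hZ : Measurable (fun p : ℝ × Ω => Z p.1 p.2))
    (hf : Measurable f) (hfb : ∃ C, ∀ y, |f y| ≤ C)
    (hshift : ∫ ω, (∫ s in (0 : ℝ)..t, f (Z (τ ω + s) ω)) ∂P
        = ∫ ω, (∫ s in (0 : ℝ)..t, f (Z s ω)) ∂P) :
    ∫ p in occupationRegion τ, f (Z (p.1 + t) p.2) ∂volume.prod P
      = ∫ p in occupationRegion τ, f (Z p.1 p.2) ∂volume.prod P := by
  have hshifted : Integrable (fun p : ℝ × Ω => f (Z (p.1 + t) p.2))
      ((volume.prod P).restrict (occupationRegion τ)) :=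
    integrable_comp_of_abs_le hf hfb (hZ.comp ((measurable_fst.add_const t).prodMk measurable_snd))
  have hunshifted : Integrable (fun p : ℝ × Ω => f (Z p.1 p.2))
      ((volume.prod P).restrict (occupationRegion τ)) :=
    integrable_comp_of_abs_le hf hfb hZ
  have hdiff : Integrable (fun p : ℝ × Ω => f (Z (p.1 + t) p.2) - f (Z p.1 p.2))
      ((volume.prod P).restrict (occupationRegion τ)) := hshifted.sub hunshifted
  rw [← sub_eq_zero, ← integral_sub hshifted hunshifted,
    setIntegral_occupationRegion_eq_integral_intervalIntegral hτ hτ0 hdiff]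
  calc ∫ ω, (∫ s in 0..τ ω, (f (Z (s + t) ω) - f (Z s ω))) ∂P
      = ∫ ω, ((∫ s in 0..t, f (Z (τ ω + s) ω)) - ∫ s in 0..t, f (Z s ω)) ∂P := by
        refine integral_congr_ae (ae_of_all _ fun ω => ?_)
        have hpath : ∀ a b, IntervalIntegrable (fun s => f (Z s ω)) volume a b :=
          intervalIntegrable_comp_of_abs_le hf hfb (hZ.comp measurable_prodMk_right)
        have hshiftedPath : ∀ a b, IntervalIntegrable (fun s => f (Z (s + t) ω)) volume a b :=
          intervalIntegrable_comp_of_abs_le hf hfb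
            (hZ.comp (measurable_prodMk_right.comp (measurable_add_const t)))
        exact (intervalIntegral.integral_sub (hshiftedPath _ _) (hpath _ _)).trans
          (intervalIntegral.integral_comp_add_right_sub_eq hpath (τ ω) t)
    _ = 0 := by
        rw [integral_sub _ (integrable_intervalIntegral_comp_of_abs_le hf hfb hZ 0 t), hshift,
          sub_self]
        exact integrable_intervalIntegral_comp_of_abs_le hf hfb
          (hZ.comp (((hτ.comp measurable_snd).add measurable_fst).prodMk measurable_snd)) 0 t

end OccupationRegion

theorem occupation_measure_up_to_stopping_time_stationary_general
    {Ω : Type*} {m0 : MeasurableSpace Ω} (P : Measure Ω) [IsProbabilityMeasure P]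
    (ℱ : Filtration ℝ m0)
    {S : Type*} [MeasurableSpace S]
    (Z : ℝ → Ω → S)
    -- progressive measurability
    (hprog : ∀ t : ℝ,
      Measurable[MeasurableSpace.prod
          (inferInstanceAs (MeasurableSpace (Set.Iic t))) (ℱ t)]
        (fun p : Set.Iic t × Ω => Z (p.1 : ℝ) p.2))
    (κ : ℝ → Kernel S S) (hκ : ∀ t, IsMarkovKernel (κ t))
    -- (i) Markov property
    (hMarkov : ∀ s t : ℝ, 0 ≤ s → 0 ≤ t → ∀ f : S → ℝ, Measurable f →
      (∃ C, ∀ y, |f y| ≤ C) →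
      P[(fun ω => f (Z (s + t) ω)) | ℱ s]
        =ᵐ[P] fun ω => ∫ y, f y ∂(κ t (Z s ω)))
    -- (ii) integrable stopping time
    (τ : Ω → ℝ) (hτ : IsStoppingTime ℱ (fun ω => (τ ω : WithTop ℝ))) (hτ0 : ∀ ω, 0 ≤ τ ω)
    (hτint : Integrable τ P)
    -- (iii) time-shift invariance at τ
    (hshift : ∀ t ≥ (0 : ℝ), ∀ f : S → ℝ, Measurable f → (∃ C, ∀ y, |f y| ≤ C) →
      ∫ ω, (∫ s in (0 : ℝ)..t, f (Z (τ ω + s) ω)) ∂P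
        = ∫ ω, (∫ s in (0 : ℝ)..t, f (Z s ω)) ∂P)
    -- the occupation measure
    (μ : Measure S)
    (hμ : μ = Measure.map (fun p : ℝ × Ω => Z p.1 p.2)
        ((volume.prod P).restrict {p : ℝ × Ω | 0 ≤ p.1 ∧ p.1 < τ p.2})) :
    (∀ t ≥ (0 : ℝ), ∀ f : S → ℝ, Measurable f → (∃ C, ∀ y, |f y| ≤ C) →
      ∫ z, (∫ y, f y ∂(κ t z)) ∂μ = ∫ z, f z ∂μ) ∧
    ((0 < ∫ ω, τ ω ∂P) →
      IsProbabilityMeasure ((μ Set.univ)⁻¹ • μ) ∧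
      ∀ t ≥ (0 : ℝ), ((μ Set.univ)⁻¹ • μ).bind (κ t) = (μ Set.univ)⁻¹ • μ) := by
  have hτm := hτ.measurable_of_coe
  have hZ := measurable_uncurry_of_progressive ℱ hprog
  have hμuniv : μ univ = ENNReal.ofReal (∫ ω, τ ω ∂P) := by
    rw [hμ, Measure.map_apply hZ .univ, preimage_univ, Measure.restrict_apply_univ]
    exact volume_prod_occupationRegion hτm hτ0 hτint
  have : IsFiniteMeasure ((volume.prod P).restrict (occupationRegion τ)) :=
    isFiniteMeasure_restrict.2
      (volume_prod_occupationRegion hτm hτ0 hτint ▸ ENNReal.ofReal_ne_top)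
  have : IsFiniteMeasure μ := ⟨by rw [hμuniv]; exact ENNReal.ofReal_lt_top⟩
  have hinvariant : ∀ t ≥ (0 : ℝ), ∀ f : S → ℝ, Measurable f → (∃ C, ∀ y, |f y| ≤ C) →
      ∫ z, (∫ y, f y ∂(κ t z)) ∂μ = ∫ z, f z ∂μ := by
    intro t ht f hf hfb
    have := hκ t
    rw [hμ, integral_map hZ.aemeasurable
        hf.stronglyMeasurable.integral_kernel.aestronglyMeasurable,
      integral_map hZ.aemeasurable hf.aestronglyMeasurable]
    exact (setIntegral_occupationRegion_kernel_eq hτ hZ (κ t) hf hfb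
        fun s hs => hMarkov s t hs ht f hf hfb).trans
      (setIntegral_occupationRegion_comp_add_eq hτm hτ0 hZ hf hfb (hshift t ht f hf hfb))
  refine ⟨hinvariant, fun hEτ => ?_⟩
  have : NeZero μ :=
    ⟨Measure.measure_univ_ne_zero.1 (hμuniv ▸ (ENNReal.ofReal_pos.2 hEτ).ne')⟩
  refine ⟨inferInstance, fun t ht => ?_⟩
  have := hκ t
  rw [Measure.bind_smul, Kernel.Invariant.def (Kernel.invariant_of_integral_eq (hinvariant t ht))]

/-- **Stationarity of the occupation measure up to a stopping time.**
Let `Z` be a progressively measurable process with values in `S`, adapted to a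
filtration `ℱ`, satisfying the Markov property w.r.t. a family of Markov kernels
`κ t`.  Let `τ` be an integrable stopping time such that the post-`τ` process has
the same time-averaged law as the original process.  Then the occupation measure
`μ(A) = E[∫₀^τ 1_A(Z_s) ds]` (realised as the pushforward under `(s, ω) ↦ Z s ω`
of the product of Lebesgue measure and `P` restricted to `{(s, ω) : 0 ≤ s < τ ω}`)
is invariant for each kernel `κ t`; if moreover `E[τ] > 0`, the normalisation of `μ`
is a stationary probability measure for the semigroup. -/
theorem occupation_measure_up_to_stopping_time_stationary
    {Ω : Type*} {m0 : MeasurableSpace Ω} (P : Measure Ω) [IsProbabilityMeasure P]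
    (ℱ : Filtration ℝ m0)
    {S : Type*} [MeasurableSpace S]
    (Z : ℝ → Ω → S)
    -- adaptedness
    (hadapted : ∀ t : ℝ, Measurable[ℱ t] (Z t))
    -- progressive measurability
    (hprog : ∀ t : ℝ,
      Measurable[MeasurableSpace.prod
          (inferInstanceAs (MeasurableSpace (Set.Iic t))) (ℱ t)]
        (fun p : Set.Iic t × Ω => Z (p.1 : ℝ) p.2))
    (κ : ℝ → Kernel S S) (hκ : ∀ t, IsMarkovKernel (κ t))
    -- (i) Markov property
    (hMarkov : ∀ s t : ℝ, 0 ≤ s → 0 ≤ t → ∀ f : S → ℝ, Measurable f →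
      (∃ C, ∀ y, |f y| ≤ C) →
      P[(fun ω => f (Z (s + t) ω)) | ℱ s]
        =ᵐ[P] fun ω => ∫ y, f y ∂(κ t (Z s ω)))
    -- (ii) integrable stopping time
    (τ : Ω → ℝ) (hτ : IsStoppingTime ℱ (fun ω => (τ ω : WithTop ℝ))) (hτ0 : ∀ ω, 0 ≤ τ ω)
    (hτint : Integrable τ P)
    -- (iii) time-shift invariance at τ
    (hshift : ∀ t ≥ (0 : ℝ), ∀ f : S → ℝ, Measurable f → (∃ C, ∀ y, |f y| ≤ C) →
      ∫ ω, (∫ s in (0 : ℝ)..t, f (Z (τ ω + s) ω)) ∂P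
        = ∫ ω, (∫ s in (0 : ℝ)..t, f (Z s ω)) ∂P)
    -- the occupation measure
    (μ : Measure S)
    (hμ : μ = Measure.map (fun p : ℝ × Ω => Z p.1 p.2)
        ((volume.prod P).restrict {p : ℝ × Ω | 0 ≤ p.1 ∧ p.1 < τ p.2})) :
    (∀ t ≥ (0 : ℝ), ∀ f : S → ℝ, Measurable f → (∃ C, ∀ y, |f y| ≤ C) →
      ∫ z, (∫ y, f y ∂(κ t z)) ∂μ = ∫ z, f z ∂μ) ∧
    ((0 < ∫ ω, τ ω ∂P) →
      IsProbabilityMeasure ((μ Set.univ)⁻¹ • μ) ∧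
      ∀ t ≥ (0 : ℝ), ((μ Set.univ)⁻¹ • μ).bind (κ t) = (μ Set.univ)⁻¹ • μ) :=
  occupation_measure_up_to_stopping_time_stationary_general P ℱ Z hprog κ hκ hMarkov τ hτ hτ0 hτint
    hshift μ hμ
end

section
/- Let v, w : ℝ^d → ℝ^d be C^∞ compactly supported vector fields, and let φ, ψ : ℝ × ℝ^d → ℝ^d be jointly C^∞ maps satisfying φ(0, x) = x, ∂_t φ(t, x) = v(φ(t, x)), ψ(0, x) = x and ∂_t ψ(t, x) = w(ψ(t, x)) for all t ∈ ℝ and x ∈ ℝ^d (i.e. φ and ψ are the flows of v and w). Define Φ(s, t, u, x) = φ(u, ψ(t, φ(s, x))), and let [v, w](x) = Dw(x)(v(x)) − Dv(x)(w(x)) be the Lie bracket. Let K ⊆ ℝ^d be compact. Then for every ε > 0 there exists δ > 0 such that for every x ∈ K, every γ ∈ (0, δ], and all reals s, t, u with t > 0, 0 ≤ s ≤ γ t, 0 ≤ u ≤ γ t and s + t + u ≤ δ, one has ‖∂_s Φ(s, t, u, x) − ∂_u Φ(s, t, u, x) − t · [v, w](x)‖ ≤ ε t. -/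
open Set
open scoped ContDiff

section Aux

variable {E F : Type*} [NormedAddCommGroup E] [NormedSpace ℝ E]
  [NormedAddCommGroup F] [NormedSpace ℝ F]

/-- A `C¹` map satisfies a Lipschitz-type bound on a compact convex set. -/
lemma aux_lip (f : F → E) (hf : ContDiff ℝ 1 f) {S : Set F} (hS : IsCompact S)
    (hconv : Convex ℝ S) :
    ∃ C : ℝ, 0 ≤ C ∧ ∀ p ∈ S, ∀ q ∈ S, ‖f p - f q‖ ≤ C * ‖p - q‖ := by
  have hcont : Continuous (fderiv ℝ f) := (hf.fderiv_right (m := 0) (by norm_num)).continuous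
  obtain ⟨C, hC⟩ := hS.exists_bound_of_continuousOn hcont.continuousOn
  refine ⟨max C 0, le_max_right _ _, fun p hp q hq => ?_⟩
  exact hconv.norm_image_sub_le_of_norm_fderiv_le
    (fun x _ => (hf.differentiable one_ne_zero).differentiableAt)
    (fun x hx => le_trans (hC x hx) (le_max_left _ _)) hq hp

/-- Slice derivative of a map on `ℝ × E`. -/
lemma aux_slice {Ψ : ℝ × E → E} (hΨ : Differentiable ℝ Ψ) (t : ℝ) (x a : E) :
    fderiv ℝ (fun y => Ψ (t, y)) x a = fderiv ℝ Ψ (t, x) (0, a) := by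
  have h1 : HasFDerivAt (fun y : E => ((t, y) : ℝ × E))
      ((0 : E →L[ℝ] ℝ).prod (ContinuousLinearMap.id ℝ E)) x :=
    (hasFDerivAt_const t x).prodMk (hasFDerivAt_id x)
  have h2 : HasFDerivAt (fun y => Ψ (t, y))
      ((fderiv ℝ Ψ (t, x)).comp ((0 : E →L[ℝ] ℝ).prod (ContinuousLinearMap.id ℝ E))) x :=
    HasFDerivAt.comp x (hΨ (t, x)).hasFDerivAt h1
  rw [h2.fderiv]
  simp

end Aux

section Key

variable {E : Type*} [NormedAddCommGroup E] [NormedSpace ℝ E]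

/-- Time derivative of the space-derivative of a flow, via symmetry of second derivatives. -/
lemma aux_key {w : E → E} (hw : ContDiff ℝ 1 w) {Ψ : ℝ × E → E} (hΨ : ContDiff ℝ 2 Ψ)
    (hflow : ∀ p : ℝ × E, fderiv ℝ Ψ p (1, 0) = w (Ψ p)) (t : ℝ) (x a : E) :
    HasDerivAt (fun t' => fderiv ℝ Ψ (t', x) (0, a))
      (fderiv ℝ w (Ψ (t, x)) (fderiv ℝ Ψ (t, x) (0, a))) t := by
  have hΨ1 : Differentiable ℝ Ψ := hΨ.differentiable (by norm_num)
  have hF2 : ContDiff ℝ 1 (fderiv ℝ Ψ) := hΨ.fderiv_right (m := 1) (by norm_num)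
  have hc : HasDerivAt (fun t' : ℝ => ((t', x) : ℝ × E)) ((1 : ℝ), (0 : E)) t :=
    (hasDerivAt_id t).prodMk (hasDerivAt_const t x)
  have hF2d : HasFDerivAt (fderiv ℝ Ψ) (fderiv ℝ (fderiv ℝ Ψ) (t, x)) (t, x) :=
    ((hF2.differentiable one_ne_zero) _).hasFDerivAt
  have h1 : HasDerivAt (fun t' => fderiv ℝ Ψ (t', x))
      (fderiv ℝ (fderiv ℝ Ψ) (t, x) (1, 0)) t := hF2d.comp_hasDerivAt t hc
  have h2 : HasDerivAt (fun t' => fderiv ℝ Ψ (t', x) (0, a))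
      (fderiv ℝ (fderiv ℝ Ψ) (t, x) (1, 0) (0, a)) t :=
    (ContinuousLinearMap.apply ℝ E ((0 : ℝ), a)).hasFDerivAt.comp_hasDerivAt t h1
  have hsym : fderiv ℝ (fderiv ℝ Ψ) (t, x) ((1 : ℝ), (0 : E)) ((0 : ℝ), a)
      = fderiv ℝ (fderiv ℝ Ψ) (t, x) ((0 : ℝ), a) ((1 : ℝ), (0 : E)) :=
    (hΨ.contDiffAt.isSymmSndFDerivAt (by simp [minSmoothness_of_isRCLikeNormedField])) _ _
  have hA : HasFDerivAt (fun p : ℝ × E => fderiv ℝ Ψ p (1, 0))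
      ((ContinuousLinearMap.apply ℝ E ((1 : ℝ), (0 : E))).comp
        (fderiv ℝ (fderiv ℝ Ψ) (t, x))) (t, x) :=
    (ContinuousLinearMap.apply ℝ E ((1 : ℝ), (0 : E))).hasFDerivAt.comp _ hF2d
  have hB : HasFDerivAt (fun p : ℝ × E => w (Ψ p))
      ((fderiv ℝ w (Ψ (t, x))).comp (fderiv ℝ Ψ (t, x))) (t, x) :=
    ((hw.differentiable one_ne_zero _).hasFDerivAt).comp _ (hΨ1 _).hasFDerivAt
  have hfun : (fun p : ℝ × E => fderiv ℝ Ψ p (1, 0)) = fun p : ℝ × E => w (Ψ p) :=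
    funext hflow
  have hB' : HasFDerivAt (fun p : ℝ × E => fderiv ℝ Ψ p (1, 0))
      ((fderiv ℝ w (Ψ (t, x))).comp (fderiv ℝ Ψ (t, x))) (t, x) := by
    rw [hfun]; exact hB
  have heq := hA.unique hB'
  have hval : fderiv ℝ (fderiv ℝ Ψ) (t, x) ((0 : ℝ), a) ((1 : ℝ), (0 : E))
      = fderiv ℝ w (Ψ (t, x)) (fderiv ℝ Ψ (t, x) (0, a)) := by
    have := congrArg (fun (L : (ℝ × E) →L[ℝ] E) => L ((0 : ℝ), a)) heq
    simpa using this
  rw [← hval, ← hsym]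
  exact h2

/-- The function whose norm we estimate: difference of the two partial derivatives. -/
noncomputable def auxG (v : E → E) (φ ψ : ℝ → E → E) : ℝ × ℝ × ℝ × E → E := fun q =>
  fderiv ℝ (fun y => φ q.2.2.1 (ψ q.2.1 y)) (φ q.1 q.2.2.2) (v (φ q.1 q.2.2.2))
    - v (φ q.2.2.1 (ψ q.2.1 (φ q.1 q.2.2.2)))

/-- The time derivative of `t ↦ auxG (0, t, 0, x)`. -/
noncomputable def auxH (v w : E → E) (ψ : ℝ → E → E) : ℝ × E → E := fun p =>
  fderiv ℝ w (ψ p.1 p.2) (fderiv ℝ (Function.uncurry ψ) p (0, v p.2))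
    - fderiv ℝ v (ψ p.1 p.2) (w (ψ p.1 p.2))

lemma auxG_contDiff {v : E → E} {φ ψ : ℝ → E → E} (hv : ContDiff ℝ 1 v)
    (hφ : ContDiff ℝ 2 (Function.uncurry φ)) (hψ : ContDiff ℝ 2 (Function.uncurry ψ)) :
    ContDiff ℝ 1 (auxG v φ ψ) := by
  have hφ1 : ContDiff ℝ 1 (Function.uncurry φ) := hφ.of_le one_le_two
  have hψ1 : ContDiff ℝ 1 (Function.uncurry ψ) := hψ.of_le one_le_two
  have hf : ContDiff ℝ 2 (fun p : (ℝ × ℝ × E) × E => φ p.1.1 (ψ p.1.2.1 p.2)) :=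
    hφ.comp ((contDiff_fst.fst).prodMk (hψ.comp ((contDiff_fst.snd.fst).prodMk contDiff_snd)))
  have hD : ContDiff ℝ 1 (fun b : ℝ × ℝ × E =>
      fderiv ℝ (fun y => φ b.1 (ψ b.2.1 y)) b.2.2) :=
    ContDiff.fderiv (f := fun (b : ℝ × ℝ × E) (y : E) => φ b.1 (ψ b.2.1 y))
      (g := fun b : ℝ × ℝ × E => b.2.2) hf contDiff_snd.snd (by norm_num)
  have h₁ : ContDiff ℝ 1 (fun q : ℝ × ℝ × ℝ × E => ((q.2.2.1, q.2.1, φ q.1 q.2.2.2) : ℝ × ℝ × E)) :=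
    (contDiff_snd.snd.fst).prodMk ((contDiff_snd.fst).prodMk
      (hφ1.comp (contDiff_fst.prodMk contDiff_snd.snd.snd)))
  have hφs : ContDiff ℝ 1 (fun q : ℝ × ℝ × ℝ × E => φ q.1 q.2.2.2) :=
    hφ1.comp (contDiff_fst.prodMk contDiff_snd.snd.snd)
  have h₂ : ContDiff ℝ 1 (fun q : ℝ × ℝ × ℝ × E => v (φ q.1 q.2.2.2)) := hv.comp hφs
  have h₃ : ContDiff ℝ 1 (fun q : ℝ × ℝ × ℝ × E => v (φ q.2.2.1 (ψ q.2.1 (φ q.1 q.2.2.2)))) :=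
    hv.comp (hφ1.comp ((contDiff_snd.snd.fst).prodMk
      (hψ1.comp ((contDiff_snd.fst).prodMk hφs))))
  exact ((hD.comp h₁).clm_apply h₂).sub h₃

lemma auxH_contDiff {v w : E → E} {ψ : ℝ → E → E} (hv : ContDiff ℝ 2 v)
    (hw : ContDiff ℝ 2 w) (hψ : ContDiff ℝ 2 (Function.uncurry ψ)) :
    ContDiff ℝ 1 (auxH v w ψ) := by
  have hψ1 : ContDiff ℝ 1 (Function.uncurry ψ) := hψ.of_le one_le_two
  have hψ1' : ContDiff ℝ 1 (fun p : ℝ × E => ψ p.1 p.2) := hψ1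
  have hv1 : ContDiff ℝ 1 v := hv.of_le one_le_two
  have hw1 : ContDiff ℝ 1 w := hw.of_le one_le_two
  have hA : ContDiff ℝ 1 (fun p : ℝ × E => fderiv ℝ w (ψ p.1 p.2)) :=
    (hw.fderiv_right (m := 1) (by norm_num)).comp hψ1'
  have hB : ContDiff ℝ 1 (fun p : ℝ × E => fderiv ℝ (Function.uncurry ψ) p (0, v p.2)) :=
    (hψ.fderiv_right (m := 1) (by norm_num)).clm_apply
      (contDiff_const.prodMk (hv1.comp contDiff_snd))
  have hC : ContDiff ℝ 1 (fun p : ℝ × E => fderiv ℝ v (ψ p.1 p.2)) :=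
    (hv.fderiv_right (m := 1) (by norm_num)).comp hψ1'
  exact (hA.clm_apply hB).sub (hC.clm_apply (hw1.comp hψ1'))

end Key

/-- **First-order commutator expansion for composed flows.**
Let `φ, ψ` be the (jointly smooth) flows of smooth compactly supported vector fields
`v, w` on `ℝ^d`, and set `Φ (s, t, u, x) = φ u (ψ t (φ s x))`.  Then on any compact
`K`, uniformly for `x ∈ K`: for every `ε > 0` there is `δ > 0` such that whenever
`0 < γ ≤ δ`, `t > 0`, `0 ≤ s ≤ γ t`, `0 ≤ u ≤ γ t` and `s + t + u ≤ δ`, one has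
`‖∂ₛΦ − ∂ᵤΦ − t • [v, w] x‖ ≤ ε t`, where `[v, w] x = Dw(x)(v x) − Dv(x)(w x)`. -/
theorem lie_bracket_flow_expansion
    (d : ℕ)
    (v w : EuclideanSpace ℝ (Fin d) → EuclideanSpace ℝ (Fin d))
    (hv : ContDiff ℝ (⊤ : ℕ∞) v) (hw : ContDiff ℝ (⊤ : ℕ∞) w)
    (hvc : HasCompactSupport v) (hwc : HasCompactSupport w)
    (φ ψ : ℝ → EuclideanSpace ℝ (Fin d) → EuclideanSpace ℝ (Fin d))
    (hφ : ContDiff ℝ (⊤ : ℕ∞) (Function.uncurry φ)) (hψ : ContDiff ℝ (⊤ : ℕ∞) (Function.uncurry ψ))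
    (hφ0 : ∀ x, φ 0 x = x) (hψ0 : ∀ x, ψ 0 x = x)
    (hφt : ∀ t x, HasDerivAt (fun t' => φ t' x) (v (φ t x)) t)
    (hψt : ∀ t x, HasDerivAt (fun t' => ψ t' x) (w (ψ t x)) t)
    (K : Set (EuclideanSpace ℝ (Fin d))) (hK : IsCompact K) :
    ∀ ε > (0 : ℝ), ∃ δ > (0 : ℝ), ∀ x ∈ K, ∀ γ ∈ Ioc (0 : ℝ) δ, ∀ s t u : ℝ,
      0 < t → 0 ≤ s → s ≤ γ * t → 0 ≤ u → u ≤ γ * t → s + t + u ≤ δ →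
      ‖deriv (fun s' => φ u (ψ t (φ s' x))) s
          - deriv (fun u' => φ u' (ψ t (φ s x))) u
          - t • (fderiv ℝ w x (v x) - fderiv ℝ v x (w x))‖ ≤ ε * t := by
  intro ε hε
  -- downgrade smoothness
  have hφ2 : ContDiff ℝ 2 (Function.uncurry φ) := hφ.of_le (WithTop.coe_le_coe.mpr le_top)
  have hψ2 : ContDiff ℝ 2 (Function.uncurry ψ) := hψ.of_le (WithTop.coe_le_coe.mpr le_top)
  have hv2 : ContDiff ℝ 2 v := hv.of_le (WithTop.coe_le_coe.mpr le_top)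
  have hw2 : ContDiff ℝ 2 w := hw.of_le (WithTop.coe_le_coe.mpr le_top)
  have hv1 : ContDiff ℝ 1 v := hv.of_le (by simp)
  have hw1 : ContDiff ℝ 1 w := hw.of_le (by simp)
  have hφd : Differentiable ℝ (Function.uncurry φ) := hφ2.differentiable two_ne_zero
  have hψd : Differentiable ℝ (Function.uncurry ψ) := hψ2.differentiable two_ne_zero
  have hvd : Differentiable ℝ v := hv1.differentiable one_ne_zero
  -- the flow identity for the full derivative of ψ
  have hflowψ : ∀ p : ℝ × EuclideanSpace ℝ (Fin d), fderiv ℝ (Function.uncurry ψ) p (1, 0)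
      = w (Function.uncurry ψ p) := by
    rintro ⟨τ, y⟩
    have hc : HasDerivAt (fun τ' : ℝ => ((τ', y) : ℝ × EuclideanSpace ℝ (Fin d))) ((1 : ℝ), (0 : EuclideanSpace ℝ (Fin d))) τ :=
      (hasDerivAt_id τ).prodMk (hasDerivAt_const τ y)
    have h := (hψd (τ, y)).hasFDerivAt.comp_hasDerivAt τ hc
    exact h.unique (hψt τ y)
  -- compact convex sets for the Lipschitz bounds
  obtain ⟨R, hR⟩ := hK.isBounded.subset_closedBall 0
  set B : Set (EuclideanSpace ℝ (Fin d)) := Metric.closedBall (0 : EuclideanSpace ℝ (Fin d)) R with hB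
  have hS₁c : IsCompact ((Icc (0:ℝ) 1) ×ˢ ((Icc (0:ℝ) 1) ×ˢ ((Icc (0:ℝ) 1) ×ˢ B))) :=
    isCompact_Icc.prod (isCompact_Icc.prod (isCompact_Icc.prod (isCompact_closedBall _ _)))
  have hS₁v : Convex ℝ ((Icc (0:ℝ) 1) ×ˢ ((Icc (0:ℝ) 1) ×ˢ ((Icc (0:ℝ) 1) ×ˢ B))) :=
    (convex_Icc _ _).prod ((convex_Icc _ _).prod ((convex_Icc _ _).prod
      (convex_closedBall _ _)))
  have hS₂c : IsCompact ((Icc (0:ℝ) 1) ×ˢ B) := isCompact_Icc.prod (isCompact_closedBall _ _)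
  have hS₂v : Convex ℝ ((Icc (0:ℝ) 1) ×ˢ B) := (convex_Icc _ _).prod (convex_closedBall _ _)
  obtain ⟨C₁, hC₁0, hC₁⟩ := aux_lip (auxG v φ ψ) (auxG_contDiff hv1 hφ2 hψ2) hS₁c hS₁v
  obtain ⟨C₂, hC₂0, hC₂⟩ := aux_lip (auxH v w ψ) (auxH_contDiff hv2 hw2 hψ2) hS₂c hS₂v
  have hden : (0 : ℝ) < C₁ + C₂ + 1 := by positivity
  refine ⟨min 1 (ε / (C₁ + C₂ + 1)), lt_min one_pos (div_pos hε hden), ?_⟩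
  intro x hx γ hγ s t u ht hs0 hsγ hu0 huγ hstu
  set δ := min 1 (ε / (C₁ + C₂ + 1)) with hδdef
  have hδ1 : δ ≤ 1 := min_le_left _ _
  have hδε : δ ≤ ε / (C₁ + C₂ + 1) := min_le_right _ _
  have hδ0 : 0 < δ := lt_min one_pos (div_pos hε hden)
  have htδ : t ≤ δ := by linarith
  have hγδ : γ ≤ δ := hγ.2
  have hsδt : s ≤ δ * t := le_trans hsγ (mul_le_mul_of_nonneg_right hγδ ht.le)
  have huδt : u ≤ δ * t := le_trans huγ (mul_le_mul_of_nonneg_right hγδ ht.le)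
  have ht1 : t ≤ 1 := le_trans htδ hδ1
  have hs1 : s ≤ 1 := le_trans hsδt (by nlinarith)
  have hu1 : u ≤ 1 := le_trans huδt (by nlinarith)
  have hxB : x ∈ B := hR hx
  -- rewrite the two derivatives
  have hDu : deriv (fun u' => φ u' (ψ t (φ s x))) u = v (φ u (ψ t (φ s x))) :=
    (hφt u (ψ t (φ s x))).deriv
  have hF : Differentiable ℝ (fun y : EuclideanSpace ℝ (Fin d) => φ u (ψ t y)) :=
    hφd.comp ((differentiable_const u).prodMk (hψd.comp
      ((differentiable_const t).prodMk differentiable_id)))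
  have hDs : deriv (fun s' => φ u (ψ t (φ s' x))) s
      = fderiv ℝ (fun y => φ u (ψ t y)) (φ s x) (v (φ s x)) :=
    ((hF _).hasFDerivAt.comp_hasDerivAt s (hφt s x)).deriv
  rw [hDs, hDu]
  -- closed form for `auxG (0, τ, 0, x)`
  have hslice0 : ∀ a : EuclideanSpace ℝ (Fin d), fderiv ℝ (Function.uncurry ψ) (0, x) ((0:ℝ), a) = a := by
    intro a
    rw [← aux_slice hψd 0 x a]
    have hid : (fun y : EuclideanSpace ℝ (Fin d) => Function.uncurry ψ (0, y)) = id := funext fun y => hψ0 y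
    rw [hid, fderiv_id]
    rfl
  have hG0 : ∀ τ : ℝ, auxG v φ ψ (0, τ, 0, x)
      = fderiv ℝ (Function.uncurry ψ) (τ, x) (0, v x) - v (ψ τ x) := by
    intro τ
    show fderiv ℝ (fun y => φ 0 (ψ τ y)) (φ 0 x) (v (φ 0 x)) - v (φ 0 (ψ τ (φ 0 x))) = _
    rw [hφ0 x]
    have hfun : (fun y : EuclideanSpace ℝ (Fin d) => φ 0 (ψ τ y)) = (fun y : EuclideanSpace ℝ (Fin d) => Function.uncurry ψ (τ, y)) :=
      funext fun y => hφ0 _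
    rw [hfun, aux_slice hψd τ x (v x), hφ0]
  -- derivative of `τ ↦ auxG (0, τ, 0, x)`
  have hgderiv : ∀ τ : ℝ, HasDerivAt (fun τ' => auxG v φ ψ (0, τ', 0, x))
      (auxH v w ψ (τ, x)) τ := by
    intro τ
    have h1 := aux_key hw1 hψ2 hflowψ τ x (v x)
    have h2 : HasDerivAt (fun τ' => v (ψ τ' x)) (fderiv ℝ v (ψ τ x) (w (ψ τ x))) τ :=
      (hvd _).hasFDerivAt.comp_hasDerivAt τ (hψt τ x)
    have h3 : HasDerivAt (fun τ' => fderiv ℝ (Function.uncurry ψ) (τ', x) (0, v x) - v (ψ τ' x)) _ τ :=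
      h1.sub h2
    have hfun2 : (fun τ' => fderiv ℝ (Function.uncurry ψ) (τ', x) (0, v x) - v (ψ τ' x))
        = fun τ' => auxG v φ ψ (0, τ', 0, x) := funext fun τ' => (hG0 τ').symm
    rw [hfun2] at h3
    exact h3
  -- value of auxH at time 0
  have hH0 : auxH v w ψ (0, x) = fderiv ℝ w x (v x) - fderiv ℝ v x (w x) := by
    show fderiv ℝ w (ψ 0 x) (fderiv ℝ (Function.uncurry ψ) (0, x) (0, v x))
        - fderiv ℝ v (ψ 0 x) (w (ψ 0 x)) = _
    rw [hslice0 (v x), hψ0]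
  have hg00 : auxG v φ ψ (0, 0, 0, x) = 0 := by
    rw [hG0 0, hslice0 (v x), hψ0, sub_self]
  -- mean value estimate for the middle term
  set L : EuclideanSpace ℝ (Fin d) := fderiv ℝ w x (v x) - fderiv ℝ v x (w x) with hL
  have hmid : ‖auxG v φ ψ (0, t, 0, x) - t • L‖ ≤ C₂ * δ * t := by
    have hr : ∀ τ ∈ Icc (0:ℝ) t, HasDerivWithinAt
        (fun τ' => auxG v φ ψ (0, τ', 0, x) - τ' • L)
        (auxH v w ψ (τ, x) - L) (Icc (0:ℝ) t) τ := by
      intro τ _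
      have h4 : HasDerivAt (fun τ' : ℝ => τ' • L) ((1:ℝ) • L) τ :=
        (hasDerivAt_id τ).smul_const L
      rw [one_smul] at h4
      exact ((hgderiv τ).sub h4).hasDerivWithinAt
    have hbound : ∀ τ ∈ Ico (0:ℝ) t, ‖auxH v w ψ (τ, x) - L‖ ≤ C₂ * δ := by
      intro τ hτ
      have hτ1 : τ ≤ 1 := le_trans hτ.2.le ht1
      have hmem1 : ((τ, x) : ℝ × EuclideanSpace ℝ (Fin d)) ∈ (Icc (0:ℝ) 1) ×ˢ B := ⟨⟨hτ.1, hτ1⟩, hxB⟩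
      have hmem2 : ((0, x) : ℝ × EuclideanSpace ℝ (Fin d)) ∈ (Icc (0:ℝ) 1) ×ˢ B := ⟨⟨le_rfl, zero_le_one⟩, hxB⟩
      have hnorm : ‖((τ, x) : ℝ × EuclideanSpace ℝ (Fin d)) - (0, x)‖ ≤ δ := by
        have : ((τ, x) : ℝ × EuclideanSpace ℝ (Fin d)) - (0, x) = (τ, 0) := by simp [Prod.ext_iff]
        rw [this, Prod.norm_def]
        simp only [norm_zero, Real.norm_eq_abs]
        rw [abs_of_nonneg hτ.1]
        exact max_le (le_trans hτ.2.le htδ) hδ0.le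
      calc ‖auxH v w ψ (τ, x) - L‖ = ‖auxH v w ψ (τ, x) - auxH v w ψ (0, x)‖ := by rw [hH0]
        _ ≤ C₂ * ‖((τ, x) : ℝ × EuclideanSpace ℝ (Fin d)) - (0, x)‖ := hC₂ _ hmem1 _ hmem2
        _ ≤ C₂ * δ := mul_le_mul_of_nonneg_left hnorm hC₂0
    have := norm_image_sub_le_of_norm_deriv_le_segment' hr hbound t ⟨ht.le, le_rfl⟩
    simpa [hg00] using this
  -- Lipschitz estimate for moving s, u to 0
  have hlip : ‖auxG v φ ψ (s, t, u, x) - auxG v φ ψ (0, t, 0, x)‖ ≤ C₁ * (δ * t) := by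
    have hmem1 : ((s, t, u, x) : ℝ × ℝ × ℝ × EuclideanSpace ℝ (Fin d))
        ∈ (Icc (0:ℝ) 1) ×ˢ ((Icc (0:ℝ) 1) ×ˢ ((Icc (0:ℝ) 1) ×ˢ B)) :=
      ⟨⟨hs0, hs1⟩, ⟨ht.le, ht1⟩, ⟨hu0, hu1⟩, hxB⟩
    have hmem2 : ((0, t, 0, x) : ℝ × ℝ × ℝ × EuclideanSpace ℝ (Fin d))
        ∈ (Icc (0:ℝ) 1) ×ˢ ((Icc (0:ℝ) 1) ×ˢ ((Icc (0:ℝ) 1) ×ˢ B)) :=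
      ⟨⟨le_rfl, zero_le_one⟩, ⟨ht.le, ht1⟩, ⟨le_rfl, zero_le_one⟩, hxB⟩
    have hnorm : ‖((s, t, u, x) : ℝ × ℝ × ℝ × EuclideanSpace ℝ (Fin d)) - (0, t, 0, x)‖ ≤ δ * t := by
      have : ((s, t, u, x) : ℝ × ℝ × ℝ × EuclideanSpace ℝ (Fin d)) - (0, t, 0, x) = (s, 0, u, 0) := by
        simp [Prod.ext_iff]
      rw [this, Prod.norm_def, Prod.norm_def, Prod.norm_def]
      simp only [norm_zero, Real.norm_eq_abs]
      rw [abs_of_nonneg hs0, abs_of_nonneg hu0]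
      have hδt : 0 ≤ δ * t := by positivity
      exact max_le hsδt (max_le hδt (max_le huδt hδt))
    calc ‖auxG v φ ψ (s, t, u, x) - auxG v φ ψ (0, t, 0, x)‖
        ≤ C₁ * ‖((s, t, u, x) : ℝ × ℝ × ℝ × EuclideanSpace ℝ (Fin d)) - (0, t, 0, x)‖ := hC₁ _ hmem1 _ hmem2
      _ ≤ C₁ * (δ * t) := mul_le_mul_of_nonneg_left hnorm hC₁0
  -- conclusion
  have hfinal : ‖auxG v φ ψ (s, t, u, x) - t • L‖ ≤ ε * t := by
    have htri := norm_sub_le_norm_sub_add_norm_sub (auxG v φ ψ (s, t, u, x))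
      (auxG v φ ψ (0, t, 0, x)) (t • L)
    have hδbound : δ * (C₁ + C₂ + 1) ≤ ε := by
      rw [← le_div_iff₀ hden]
      exact hδε
    nlinarith [htri, hlip, hmid, ht.le, hδ0.le]
  exact hfinal
end

section
/- Let v, w : ℝ^d → ℝ^d be C^∞ compactly supported vector fields, and let φ, ψ : ℝ × ℝ^d → ℝ^d be jointly C^∞ maps satisfying φ(0, x) = x, ∂_t φ(t, x) = v(φ(t, x)), ψ(0, x) = x and ∂_t ψ(t, x) = w(ψ(t, x)) for all t ∈ ℝ and x ∈ ℝ^d. Let K ⊆ ℝ^d be compact. Then for every ε > 0 there exists δ > 0 such that for every x ∈ K, every γ ∈ (0, δ], and all reals s, t, u with t > 0, 0 ≤ s ≤ γ t, 0 ≤ u ≤ γ t and s + t + u ≤ δ, one has ‖v(φ(u, ψ(t, φ(s, x)))) − v(x) − t · Dv(x)(w(x))‖ ≤ ε t. -/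
open Set
set_option maxHeartbeats 1000000

/-- **Expansion of the vector field along composed flows (∂ᵤ term).**
Let `φ, ψ` be the (jointly smooth) flows of smooth compactly supported vector fields
`v, w` on `ℝ^d`.  Then on any compact `K`, uniformly for `x ∈ K`: for every `ε > 0`
there is `δ > 0` such that whenever `0 < γ ≤ δ`, `t > 0`, `0 ≤ s ≤ γ t`,
`0 ≤ u ≤ γ t` and `s + t + u ≤ δ`, one has
`‖v (φ u (ψ t (φ s x))) − v x − t • Dv(x)(w x)‖ ≤ ε t`. -/
theorem vector_field_along_composed_flows_expansion
    (d : ℕ)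
    (v w : EuclideanSpace ℝ (Fin d) → EuclideanSpace ℝ (Fin d))
    (hv : ContDiff ℝ (⊤ : ℕ∞) v) (hw : ContDiff ℝ (⊤ : ℕ∞) w)
    (hvc : HasCompactSupport v) (hwc : HasCompactSupport w)
    (φ ψ : ℝ → EuclideanSpace ℝ (Fin d) → EuclideanSpace ℝ (Fin d))
    (hφ : ContDiff ℝ (⊤ : ℕ∞) (Function.uncurry φ)) (hψ : ContDiff ℝ (⊤ : ℕ∞) (Function.uncurry ψ))
    (hφ0 : ∀ x, φ 0 x = x) (hψ0 : ∀ x, ψ 0 x = x)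
    (hφt : ∀ t x, HasDerivAt (fun t' => φ t' x) (v (φ t x)) t)
    (hψt : ∀ t x, HasDerivAt (fun t' => ψ t' x) (w (ψ t x)) t)
    (K : Set (EuclideanSpace ℝ (Fin d))) (hK : IsCompact K) :
    ∀ ε > (0 : ℝ), ∃ δ > (0 : ℝ), ∀ x ∈ K, ∀ γ ∈ Ioc (0 : ℝ) δ, ∀ s t u : ℝ,
      0 < t → 0 ≤ s → s ≤ γ * t → 0 ≤ u → u ≤ γ * t → s + t + u ≤ δ →
      ‖v (φ u (ψ t (φ s x))) - v x - t • (fderiv ℝ v x (w x))‖ ≤ ε * t := by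
  intro ε hε
  -- the auxiliary field h p = Dv(p)(w p)
  set h : EuclideanSpace ℝ (Fin d) → EuclideanSpace ℝ (Fin d) :=
    fun p => fderiv ℝ v p (w p) with hh
  have hv1 : Differentiable ℝ v := hv.differentiable (by simp)
  have hhsmooth : ContDiff ℝ (⊤ : ℕ∞) h :=
    (hv.fderiv_right (m := (⊤ : ℕ∞)) (by simp)).clm_apply hw
  have hhc : HasCompactSupport h := by
    apply (hvc.fderiv ℝ).mono
    intro p hp
    simp only [Function.mem_support] at hp ⊢
    intro hz
    exact hp (by simp [hh, hz])
  -- bounds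
  obtain ⟨Cv, hCv⟩ := hvc.exists_bound_of_continuous hv.continuous
  obtain ⟨Cw, hCw⟩ := hwc.exists_bound_of_continuous hw.continuous
  obtain ⟨L, hL⟩ := ContDiff.lipschitzWith_of_hasCompactSupport hvc hv (by simp)
  obtain ⟨L₂, hL₂⟩ := ContDiff.lipschitzWith_of_hasCompactSupport hhc hhsmooth (by simp)
  set M : ℝ := max Cv Cw with hM
  have hM0 : 0 ≤ M := le_trans (norm_nonneg (v 0)) ((hCv 0).trans (le_max_left _ _))
  have hvM : ∀ p, ‖v p‖ ≤ M := fun p => (hCv p).trans (le_max_left _ _)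
  have hwM : ∀ p, ‖w p‖ ≤ M := fun p => (hCw p).trans (le_max_right _ _)
  -- flows move points at speed at most M
  have hφlip : ∀ y, LipschitzWith M.toNNReal (fun t' => φ t' y) := by
    intro y
    apply lipschitzWith_of_nnnorm_deriv_le (fun τ => (hφt τ y).differentiableAt)
    intro τ
    rw [(hφt τ y).deriv]
    rw [← NNReal.coe_le_coe, coe_nnnorm, Real.coe_toNNReal _ hM0]
    exact hvM _
  have hψlip : ∀ y, LipschitzWith M.toNNReal (fun t' => ψ t' y) := by
    intro y
    apply lipschitzWith_of_nnnorm_deriv_le (fun τ => (hψt τ y).differentiableAt)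
    intro τ
    rw [(hψt τ y).deriv]
    rw [← NNReal.coe_le_coe, coe_nnnorm, Real.coe_toNNReal _ hM0]
    exact hwM _
  have hφmove : ∀ (a : ℝ) y, 0 ≤ a → ‖φ a y - y‖ ≤ M * a := by
    intro a y ha
    have := (hφlip y).dist_le_mul a 0
    rw [hφ0 y, dist_eq_norm] at this
    simpa [Real.coe_toNNReal _ hM0, abs_of_nonneg ha] using this
  have hψmove : ∀ (a : ℝ) y, 0 ≤ a → ‖ψ a y - y‖ ≤ M * a := by
    intro a y ha
    have := (hψlip y).dist_le_mul a 0
    rw [hψ0 y, dist_eq_norm] at this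
    simpa [Real.coe_toNNReal _ hM0, abs_of_nonneg ha] using this
  -- choose δ
  set C : ℝ := M * (2 * L + 2 * L₂) + 1 with hC
  have hC0 : 0 < C := by positivity
  refine ⟨min 1 (ε / C), lt_min one_pos (div_pos hε hC0), ?_⟩
  intro x _ γ hγ s t u ht hs hsγ hu huγ hstu
  set δ : ℝ := min 1 (ε / C) with hδ
  have hγδ : γ ≤ δ := hγ.2
  have htδ : t ≤ δ := by nlinarith
  have hδ1 : δ ≤ 1 := min_le_left _ _
  have hγ1 : γ ≤ 1 := hγδ.trans hδ1
  set z := φ s x with hz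
  set y := ψ t z with hy
  -- main splitting
  have key : v (φ u y) - v x - t • h x =
      (v (φ u y) - v y) + (v (ψ t z) - v z - t • h z) + (v z - v x) + t • (h z - h x) := by
    simp only [hy]
    abel_nf
    module
  -- term 1
  have T1 : ‖v (φ u y) - v y‖ ≤ L * (M * u) := by
    have := hL.dist_le_mul (φ u y) y
    rw [dist_eq_norm] at this
    exact this.trans (mul_le_mul_of_nonneg_left (hφmove u y hu) L.coe_nonneg)
  -- term 3
  have T3 : ‖v z - v x‖ ≤ L * (M * s) := by
    have := hL.dist_le_mul z x
    rw [dist_eq_norm] at this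
    exact this.trans (mul_le_mul_of_nonneg_left (hφmove s x hs) L.coe_nonneg)
  -- term 4
  have T4 : ‖h z - h x‖ ≤ L₂ * (M * s) := by
    have := hL₂.dist_le_mul z x
    rw [dist_eq_norm] at this
    exact this.trans (mul_le_mul_of_nonneg_left (hφmove s x hs) L₂.coe_nonneg)
  -- term 2 : Taylor estimate along ψ
  have T2 : ‖v (ψ t z) - v z - t • h z‖ ≤ L₂ * (M * t) * t := by
    have hG : ∀ τ ∈ Icc (0:ℝ) t,
        HasDerivWithinAt (fun τ' => v (ψ τ' z) - τ' • h z) (h (ψ τ z) - h z) (Icc 0 t) τ := by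
      intro τ _
      have h1 : HasDerivAt (fun τ' => v (ψ τ' z)) (h (ψ τ z)) τ :=
        ((hv1 (ψ τ z)).hasFDerivAt).comp_hasDerivAt τ (hψt τ z)
      have h2 : HasDerivAt (fun τ' : ℝ => τ' • h z) (h z) τ := by
        simpa using (hasDerivAt_id τ).smul_const (h z)
      exact (h1.sub h2).hasDerivWithinAt
    have hbound : ∀ τ ∈ Icc (0:ℝ) t, ‖h (ψ τ z) - h z‖ ≤ L₂ * (M * t) := by
      intro τ hτ
      have := hL₂.dist_le_mul (ψ τ z) z
      rw [dist_eq_norm] at this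
      refine this.trans ?_
      refine mul_le_mul_of_nonneg_left ((hψmove τ z hτ.1).trans ?_) L₂.coe_nonneg
      exact mul_le_mul_of_nonneg_left hτ.2 hM0
    have hmvt := (convex_Icc (0:ℝ) t).norm_image_sub_le_of_norm_hasDerivWithin_le hG hbound
      (left_mem_Icc.2 ht.le) (right_mem_Icc.2 ht.le)
    have h0 : v (ψ 0 z) - (0:ℝ) • h z = v z := by simp [hψ0 z]
    calc ‖v (ψ t z) - v z - t • h z‖ = ‖v (ψ t z) - t • h z - v z‖ := by rw [sub_right_comm]
      _ ≤ L₂ * (M * t) * ‖t‖ := by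
          simp only [hψ0, zero_smul, sub_zero] at hmvt
          exact hmvt
      _ = L₂ * (M * t) * t := by rw [Real.norm_eq_abs, abs_of_pos ht]
  calc ‖v (φ u y) - v x - t • h x‖
      ≤ ‖v (φ u y) - v y‖ + ‖v (ψ t z) - v z - t • h z‖ + ‖v z - v x‖ + ‖t • (h z - h x)‖ := by
        rw [key]
        exact (norm_add_le _ _).trans (add_le_add_left
          ((norm_add_le _ _).trans (add_le_add_left (norm_add_le _ _) _)) _)
    _ ≤ L * (M * u) + L₂ * (M * t) * t + L * (M * s) + t * (L₂ * (M * s)) := by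
        have : ‖t • (h z - h x)‖ = t * ‖h z - h x‖ := by
          rw [norm_smul, Real.norm_eq_abs, abs_of_pos ht]
        rw [this]
        gcongr
    _ ≤ ε * t := by
        have hsδt : s ≤ δ * t := le_trans hsγ (mul_le_mul_of_nonneg_right hγδ ht.le)
        have huδt : u ≤ δ * t := le_trans huγ (mul_le_mul_of_nonneg_right hγδ ht.le)
        have ht1 : t ≤ 1 := htδ.trans hδ1
        have hδ0 : (0:ℝ) < δ := lt_min one_pos (div_pos hε hC0)
        have hA0 : (0:ℝ) ≤ δ * t := by positivity
        have hL0 : (0:ℝ) ≤ L := L.coe_nonneg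
        have hL₂0 : (0:ℝ) ≤ L₂ := L₂.coe_nonneg
        have hδε : δ * C ≤ ε := by
          have hle : δ ≤ ε / C := min_le_right _ _
          calc δ * C ≤ (ε / C) * C := mul_le_mul_of_nonneg_right hle hC0.le
            _ = ε := div_mul_cancel₀ ε hC0.ne'
        calc (L:ℝ) * (M * u) + L₂ * (M * t) * t + L * (M * s) + t * (L₂ * (M * s))
            ≤ (L:ℝ) * (M * (δ * t)) + L₂ * (M * δ) * t + L * (M * (δ * t))
              + 1 * (L₂ * (M * (δ * t))) := by gcongr
          _ = (M * (2 * L + 2 * L₂)) * (δ * t) := by ring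
          _ ≤ C * (δ * t) := by
              rw [hC]
              nlinarith [hA0]
          _ = (δ * C) * t := by ring
          _ ≤ ε * t := mul_le_mul_of_nonneg_right hδε ht.le
end

section
/- Let v, w : ℝ^d → ℝ^d be C^∞ compactly supported vector fields, and let φ, ψ : ℝ × ℝ^d → ℝ^d be jointly C^∞ maps satisfying φ(0, x) = x, ∂_t φ(t, x) = v(φ(t, x)), ψ(0, x) = x and ∂_t ψ(t, x) = w(ψ(t, x)) for all t ∈ ℝ and x ∈ ℝ^d. Let K ⊆ ℝ^d be compact. Then for every ε > 0 there exists δ > 0 such that for every x ∈ K, every γ ∈ (0, δ], and all reals s, t, u with t > 0, 0 ≤ s ≤ γ t, 0 ≤ u ≤ γ t and s + t + u ≤ δ, the derivative in s of the map s' ↦ φ(u, ψ(t, φ(s', x))), evaluated at s' = s, satisfies ‖∂_s [φ(u, ψ(t, φ(s, x)))] − v(x) − t · Dw(x)(v(x))‖ ≤ ε t. -/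
open Set


variable {E : Type*} [NormedAddCommGroup E] [NormedSpace ℝ E]

noncomputable def flowG (φ ψ : ℝ → E → E) : (ℝ × ℝ × ℝ) × E → E :=
  fun q => deriv (fun s' => φ q.1.2.2 (ψ q.1.2.1 (φ s' q.2))) q.1.1

theorem flowG_contDiff {φ ψ : ℝ → E → E}
    (hφ : ContDiff ℝ (⊤ : ℕ∞) (Function.uncurry φ)) (hψ : ContDiff ℝ (⊤ : ℕ∞) (Function.uncurry ψ)) :
    ContDiff ℝ (⊤ : ℕ∞) (flowG φ ψ) := by
  have h1 : ContDiff ℝ (⊤ : ℕ∞) (Function.uncurry (fun (q : (ℝ × ℝ × ℝ) × E) (s' : ℝ) =>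
      φ q.1.2.2 (ψ q.1.2.1 (φ s' q.2)))) := by
    exact hφ.comp <| (contDiff_fst.fst.snd.snd).prodMk (hψ.comp ((contDiff_fst.fst.snd.fst).prodMk
      (hφ.comp (contDiff_snd.prodMk contDiff_fst.snd))))
  have h2 : ContDiff ℝ (⊤ : ℕ∞) (fun q : (ℝ × ℝ × ℝ) × E =>
      fderiv ℝ (fun s' => φ q.1.2.2 (ψ q.1.2.1 (φ s' q.2))) q.1.1) :=
    h1.fderiv contDiff_fst.fst (by simp)
  exact h2.clm_apply contDiff_const

theorem flowG_zero {φ ψ : ℝ → E → E} {v : E → E}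
    (hφ0 : ∀ x, φ 0 x = x) (hψ0 : ∀ x, ψ 0 x = x)
    (hφt : ∀ t x, HasDerivAt (fun t' => φ t' x) (v (φ t x)) t) (x : E) :
    flowG φ ψ (((0:ℝ),(0:ℝ),(0:ℝ)), x) = v x := by
  have h1 : flowG φ ψ (((0:ℝ),(0:ℝ),(0:ℝ)), x) = deriv (fun s' => φ s' x) 0 := by
    show deriv (fun s' => φ 0 (ψ 0 (φ s' x))) 0 = _
    simp only [hψ0, hφ0]
  rw [h1, (hφt 0 x).deriv, hφ0]

theorem flowG_fderiv_t {φ ψ : ℝ → E → E} {v w : E → E}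
    (hw : ContDiff ℝ (⊤ : ℕ∞) w)
    (hφ : ContDiff ℝ (⊤ : ℕ∞) (Function.uncurry φ)) (hψ : ContDiff ℝ (⊤ : ℕ∞) (Function.uncurry ψ))
    (hφ0 : ∀ x, φ 0 x = x) (hψ0 : ∀ x, ψ 0 x = x)
    (hφt : ∀ t x, HasDerivAt (fun t' => φ t' x) (v (φ t x)) t)
    (hψt : ∀ t x, HasDerivAt (fun t' => ψ t' x) (w (ψ t x)) t) (x : E) :
    fderiv ℝ (flowG φ ψ) (((0:ℝ),(0:ℝ),(0:ℝ)), x) (((0:ℝ),(1:ℝ),(0:ℝ)), (0:E))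
      = fderiv ℝ w x (v x) := by
  set a := v x with ha
  set Ψ := Function.uncurry ψ with hΨ
  have hΨd : ∀ p : ℝ × E, HasFDerivAt Ψ (fderiv ℝ Ψ p) p := fun p =>
    (hψ.differentiable (by simp) p).hasFDerivAt
  have hΨ' : ContDiff ℝ (⊤ : ℕ∞) (fderiv ℝ Ψ) := hψ.fderiv_right (by simp)
  set f'' := fderiv ℝ (fderiv ℝ Ψ) ((0:ℝ), x) with hf''def
  have hf'' : HasFDerivAt (fderiv ℝ Ψ) f'' ((0:ℝ), x) :=
    (hΨ'.differentiable (by simp) _).hasFDerivAt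
  have hsymm := second_derivative_symmetric hΨd hf''
  -- partial-t derivative of Ψ
  have key1 : ∀ p : ℝ × E, fderiv ℝ Ψ p ((1:ℝ), (0:E)) = w (Ψ p) := by
    rintro ⟨t, y⟩
    have hc : HasDerivAt (fun t' : ℝ => ((t' : ℝ), y)) ((1:ℝ), (0:E)) t :=
      (hasDerivAt_id t).prodMk (hasDerivAt_const t y)
    have h1 : HasDerivAt (fun t' => ψ t' y) (fderiv ℝ Ψ (t, y) ((1:ℝ), (0:E))) t :=
      by have := (hΨd (t, y)).comp_hasDerivAt t hc; exact this
    exact h1.unique (hψt t y)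
  -- A = evaluation at (1,0)
  have e1 : HasFDerivAt (fun p : ℝ × E => fderiv ℝ Ψ p ((1:ℝ), (0:E)))
      ((ContinuousLinearMap.apply ℝ E (((1:ℝ), (0:E)) : ℝ × E)).comp f'') ((0:ℝ), x) :=
    (ContinuousLinearMap.apply ℝ E (((1:ℝ), (0:E)) : ℝ × E)).hasFDerivAt.comp _ hf''
  have hΨ0x : Ψ ((0:ℝ), x) = x := hψ0 x
  have e2 : HasFDerivAt (fun p : ℝ × E => w (Ψ p))
      ((fderiv ℝ w x).comp (fderiv ℝ Ψ ((0:ℝ), x))) ((0:ℝ), x) := by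
    have hwx : HasFDerivAt w (fderiv ℝ w x) (Ψ ((0:ℝ), x)) := by
      rw [hΨ0x]; exact (hw.differentiable (by simp) x).hasFDerivAt
    exact hwx.comp _ (hΨd _)
  have e12 : (ContinuousLinearMap.apply ℝ E (((1:ℝ), (0:E)) : ℝ × E)).comp f''
      = (fderiv ℝ w x).comp (fderiv ℝ Ψ ((0:ℝ), x)) := by
    refine e1.unique ?_
    refine e2.congr_of_eventuallyEq (Filter.Eventually.of_forall fun p => ?_)
    exact key1 p
  -- derivative of Ψ(0,·) is the identity
  have e3 : fderiv ℝ Ψ ((0:ℝ), x) ((0:ℝ), a) = a := by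
    have hD2 : HasFDerivAt (fun y : E => (((0:ℝ), y) : ℝ × E))
        (((0 : E →L[ℝ] ℝ)).prod (ContinuousLinearMap.id ℝ E)) x :=
      (hasFDerivAt_const (0:ℝ) x).prodMk (hasFDerivAt_id x)
    have h4 : HasFDerivAt (fun y : E => Ψ ((0:ℝ), y))
        ((fderiv ℝ Ψ ((0:ℝ), x)).comp (((0 : E →L[ℝ] ℝ)).prod (ContinuousLinearMap.id ℝ E))) x :=
      (hΨd _).comp _ hD2
    have h6 : HasFDerivAt (id : E → E)
        ((fderiv ℝ Ψ ((0:ℝ), x)).comp (((0 : E →L[ℝ] ℝ)).prod (ContinuousLinearMap.id ℝ E))) x := by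
      refine h4.congr_of_eventuallyEq (Filter.Eventually.of_forall fun y => ?_)
      exact (hψ0 y).symm
    have h7 := h6.unique (hasFDerivAt_id x)
    have : ((fderiv ℝ Ψ ((0:ℝ), x)).comp
        (((0 : E →L[ℝ] ℝ)).prod (ContinuousLinearMap.id ℝ E))) a = a := by
      rw [h7]; rfl
    simpa using this
  have e4 : f'' (((1:ℝ), (0:E)) : ℝ × E) (((0:ℝ), a) : ℝ × E) = fderiv ℝ w x a := by
    rw [hsymm (((1:ℝ), (0:E)) : ℝ × E) (((0:ℝ), a) : ℝ × E)]
    have h8 : f'' (((0:ℝ), a) : ℝ × E) (((1:ℝ), (0:E)) : ℝ × E)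
        = ((ContinuousLinearMap.apply ℝ E (((1:ℝ), (0:E)) : ℝ × E)).comp f'') ((0:ℝ), a) := rfl
    rw [h8, e12]
    simp [e3]
  -- the curve t ↦ fderiv Ψ (t,x) (0,a)
  have hm : HasDerivAt (fun t : ℝ => fderiv ℝ Ψ (t, x) ((0:ℝ), a)) (fderiv ℝ w x a) 0 := by
    have hc : HasDerivAt (fun t : ℝ => ((t, x) : ℝ × E)) ((1:ℝ), (0:E)) 0 :=
      (hasDerivAt_id 0).prodMk (hasDerivAt_const 0 x)
    have h7 : HasDerivAt (fun t : ℝ => fderiv ℝ Ψ (t, x)) (f'' ((1:ℝ), (0:E))) 0 :=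
      hf''.comp_hasDerivAt 0 hc
    have h8 := (ContinuousLinearMap.apply ℝ E (((0:ℝ), a) : ℝ × E)).hasFDerivAt.comp_hasDerivAt 0 h7
    simpa [e4, Function.comp_def] using h8
  -- G along the t-axis equals that curve
  have hGm : ∀ t : ℝ, flowG φ ψ (((0:ℝ), t, (0:ℝ)), x) = fderiv ℝ Ψ (t, x) ((0:ℝ), a) := by
    intro t
    have hcurve : HasDerivAt (fun s' => φ s' x) a 0 := by
      have := hφt 0 x; rwa [hφ0] at this
    have hD2 : HasFDerivAt (fun y : E => ((t, y) : ℝ × E))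
        (((0 : E →L[ℝ] ℝ)).prod (ContinuousLinearMap.id ℝ E)) x :=
      (hasFDerivAt_const t x).prodMk (hasFDerivAt_id x)
    have houter : HasFDerivAt (fun y : E => Ψ (t, y))
        ((fderiv ℝ Ψ (t, x)).comp (((0 : E →L[ℝ] ℝ)).prod (ContinuousLinearMap.id ℝ E))) x :=
      (hΨd _).comp _ hD2
    have h9 : HasDerivAt (fun s' => ψ t (φ s' x))
        (((fderiv ℝ Ψ (t, x)).comp (((0 : E →L[ℝ] ℝ)).prod (ContinuousLinearMap.id ℝ E))) a) 0 :=
      houter.comp_hasDerivAt_of_eq 0 hcurve (hφ0 x).symm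
    have h10 : flowG φ ψ (((0:ℝ), t, (0:ℝ)), x) = deriv (fun s' => ψ t (φ s' x)) 0 := by
      show deriv (fun s' => φ 0 (ψ t (φ s' x))) 0 = _
      simp only [hφ0]
    rw [h10, h9.deriv]
    simp
  -- conclude by uniqueness of the directional derivative
  have hGdiff : HasFDerivAt (flowG φ ψ)
      (fderiv ℝ (flowG φ ψ) (((0:ℝ),(0:ℝ),(0:ℝ)), x)) (((0:ℝ),(0:ℝ),(0:ℝ)), x) :=
    ((flowG_contDiff hφ hψ).differentiable (by simp) _).hasFDerivAt
  have hc : HasDerivAt (fun t : ℝ => ((((0:ℝ), t, (0:ℝ)), x) : (ℝ × ℝ × ℝ) × E))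
      ((((0:ℝ), (1:ℝ), (0:ℝ)), (0:E)) : (ℝ × ℝ × ℝ) × E) 0 :=
    (((hasDerivAt_const 0 (0:ℝ)).prodMk ((hasDerivAt_id 0).prodMk
      (hasDerivAt_const 0 (0:ℝ))))).prodMk (hasDerivAt_const 0 x)
  have h10 := hGdiff.comp_hasDerivAt 0 hc
  have h11 : HasDerivAt (fun t : ℝ => flowG φ ψ (((0:ℝ), t, (0:ℝ)), x)) (fderiv ℝ w x a) 0 :=
    hm.congr_of_eventuallyEq (Filter.Eventually.of_forall fun t => hGm t)
  exact (h10.unique h11).symm ▸ rfl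


set_option maxHeartbeats 4000000 in
/-- **Expansion of the ∂ₛ derivative of composed flows.**
Let `φ, ψ` be the (jointly smooth) flows of smooth compactly supported vector fields
`v, w` on `ℝ^d`.  Then on any compact `K`, uniformly for `x ∈ K`: for every `ε > 0`
there is `δ > 0` such that whenever `0 < γ ≤ δ`, `t > 0`, `0 ≤ s ≤ γ t`,
`0 ≤ u ≤ γ t` and `s + t + u ≤ δ`, the derivative in `s` of
`s' ↦ φ u (ψ t (φ s' x))` satisfies
`‖∂ₛ [φ u (ψ t (φ s x))] − v x − t • Dw(x)(v x)‖ ≤ ε t`. -/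
theorem deriv_s_composed_flows_expansion
    (d : ℕ)
    (v w : EuclideanSpace ℝ (Fin d) → EuclideanSpace ℝ (Fin d))
    (hv : ContDiff ℝ (⊤ : ℕ∞) v) (hw : ContDiff ℝ (⊤ : ℕ∞) w)
    (hvc : HasCompactSupport v) (hwc : HasCompactSupport w)
    (φ ψ : ℝ → EuclideanSpace ℝ (Fin d) → EuclideanSpace ℝ (Fin d))
    (hφ : ContDiff ℝ (⊤ : ℕ∞) (Function.uncurry φ)) (hψ : ContDiff ℝ (⊤ : ℕ∞) (Function.uncurry ψ))
    (hφ0 : ∀ x, φ 0 x = x) (hψ0 : ∀ x, ψ 0 x = x)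
    (hφt : ∀ t x, HasDerivAt (fun t' => φ t' x) (v (φ t x)) t)
    (hψt : ∀ t x, HasDerivAt (fun t' => ψ t' x) (w (ψ t x)) t)
    (K : Set (EuclideanSpace ℝ (Fin d))) (hK : IsCompact K) :
    ∀ ε > (0 : ℝ), ∃ δ > (0 : ℝ), ∀ x ∈ K, ∀ γ ∈ Ioc (0 : ℝ) δ, ∀ s t u : ℝ,
      0 < t → 0 ≤ s → s ≤ γ * t → 0 ≤ u → u ≤ γ * t → s + t + u ≤ δ →
      ‖deriv (fun s' => φ u (ψ t (φ s' x))) s - v x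
          - t • (fderiv ℝ w x (v x))‖ ≤ ε * t := by
  intro ε hε
  set G := flowG φ ψ with hGdef
  have hG : ContDiff ℝ (⊤ : ℕ∞) G := flowG_contDiff hφ hψ
  have hG1 : ContDiff ℝ (⊤ : ℕ∞) (fderiv ℝ G) := hG.fderiv_right (by simp)
  -- bound on the derivative of G at base points over K
  obtain ⟨M₀, hM₀⟩ := hK.exists_bound_of_continuousOn
    (f := fun x : (EuclideanSpace ℝ (Fin d)) => fderiv ℝ G (((0:ℝ),(0:ℝ),(0:ℝ)), x))
    ((hG1.continuous.comp (by fun_prop : Continuous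
      (fun x : (EuclideanSpace ℝ (Fin d)) => ((((0:ℝ),(0:ℝ),(0:ℝ)), x) : (ℝ × ℝ × ℝ) × (EuclideanSpace ℝ (Fin d)))))).continuousOn)
  set M := max M₀ 0 with hM
  have hMnn : (0:ℝ) ≤ M := le_max_right _ _
  -- uniform continuity of fderiv G on a compact set
  set Cset : Set ((ℝ × ℝ × ℝ) × (EuclideanSpace ℝ (Fin d))) := Metric.closedBall (0 : ℝ × ℝ × ℝ) 1 ×ˢ K with hCset
  have hCc : IsCompact Cset := (isCompact_closedBall _ _).prod hK
  have hUC := hCc.uniformContinuousOn_of_continuous hG1.continuous.continuousOn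
  obtain ⟨δ₁, hδ₁, hUC'⟩ := Metric.uniformContinuousOn_iff.mp hUC (ε/4) (by linarith)
  refine ⟨min 1 (min (δ₁/2) (ε/(4*(M+1)))), by positivity, ?_⟩
  intro x hx γ hγ s t u ht hs hsγ hu huγ hsum
  set δ : ℝ := min 1 (min (δ₁/2) (ε/(4*(M+1)))) with hδdef
  have hδ1 : δ ≤ 1 := min_le_left _ _
  have hδ2 : δ ≤ δ₁/2 := le_trans (min_le_right _ _) (min_le_left _ _)
  have hδ3 : δ ≤ ε/(4*(M+1)) := le_trans (min_le_right _ _) (min_le_right _ _)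
  have hγδ : γ ≤ δ := hγ.2
  have htδ : t ≤ δ := by linarith
  have hst : s ≤ t := le_trans hsγ (by nlinarith [hγ.1.le])
  have hut : u ≤ t := le_trans huγ (by nlinarith [hγ.1.le])
  set q₀ : (ℝ × ℝ × ℝ) × (EuclideanSpace ℝ (Fin d)) := (((0:ℝ),(0:ℝ),(0:ℝ)), x) with hq₀
  set q : (ℝ × ℝ × ℝ) × (EuclideanSpace ℝ (Fin d)) := ((s, t, u), x) with hq
  -- norms
  have hnstu : ‖((s, t, u) : ℝ × ℝ × ℝ)‖ ≤ t := by
    rw [Prod.norm_def, Prod.norm_def]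
    simp only [Real.norm_eq_abs]
    rw [abs_of_nonneg hs, abs_of_nonneg ht.le, abs_of_nonneg hu]
    exact max_le hst (max_le le_rfl hut)
  have hqq₀ : q - q₀ = (((s, t, u) : ℝ × ℝ × ℝ), (0:(EuclideanSpace ℝ (Fin d)))) := by
    simp [hq, hq₀, Prod.ext_iff]
  have hnq : ‖q - q₀‖ ≤ t := by
    rw [hqq₀, Prod.norm_def]
    simpa using hnstu
  -- the segment lies in the good set
  set V : Set ((ℝ × ℝ × ℝ) × (EuclideanSpace ℝ (Fin d))) := Metric.closedBall (0 : ℝ × ℝ × ℝ) δ ×ˢ {x} with hV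
  have hVconv : Convex ℝ V := (convex_closedBall _ _).prod (convex_singleton x)
  have hq₀V : q₀ ∈ V := by
    constructor
    · simp [hq₀, Metric.mem_closedBall]; linarith [hγ.1, hγδ]
    · simp [hq₀]
  have hqV : q ∈ V := by
    constructor
    · simp only [Metric.mem_closedBall, dist_zero_right]
      exact le_trans hnstu htδ
    · simp [hq]
  have hseg : segment ℝ q₀ q ⊆ V := hVconv.segment_subset hq₀V hqV
  have hVC : ∀ p ∈ V, p ∈ Cset ∧ dist p q₀ < δ₁ := by
    rintro ⟨p1, p2⟩ ⟨hp1, hp2⟩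
    simp only [mem_singleton_iff] at hp2
    subst hp2
    simp only [Metric.mem_closedBall, dist_zero_right] at hp1
    constructor
    · exact ⟨by simpa [Metric.mem_closedBall] using le_trans hp1 hδ1, hx⟩
    · rw [hq₀, Prod.dist_eq]
      have hd : dist p1 (((0:ℝ),(0:ℝ),(0:ℝ)) : ℝ × ℝ × ℝ) = ‖p1‖ := by
        rw [show (((0:ℝ),(0:ℝ),(0:ℝ)) : ℝ × ℝ × ℝ) = 0 from rfl, dist_zero_right]
      rw [hd, dist_self]
      have : max ‖p1‖ 0 ≤ δ₁/2 := max_le (le_trans hp1 hδ2) (by linarith)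
      linarith
  have hq₀C : q₀ ∈ Cset := ⟨by simp [hq₀, Metric.mem_closedBall], hx⟩
  -- mean value estimate
  set L := fderiv ℝ G q₀ with hL
  have hmain : ‖G q - G q₀ - L (q - q₀)‖ ≤ (ε/4) * ‖q - q₀‖ := by
    refine (convex_segment q₀ q).norm_image_sub_le_of_norm_fderiv_le'
      (fun p _ => (hG.differentiable (by simp)).differentiableAt)
      (fun p hp => ?_) (left_mem_segment ℝ q₀ q) (right_mem_segment ℝ q₀ q)
    obtain ⟨hpC, hpd⟩ := hVC p (hseg hp)
    have := hUC' p hpC q₀ hq₀C hpd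
    rw [dist_eq_norm] at this
    exact this.le
  -- decompose L (q - q₀)
  have hdecomp : ((((s, t, u) : ℝ × ℝ × ℝ), (0:(EuclideanSpace ℝ (Fin d)))) : (ℝ × ℝ × ℝ) × (EuclideanSpace ℝ (Fin d)))
      = s • ((((1:ℝ),(0:ℝ),(0:ℝ)), (0:(EuclideanSpace ℝ (Fin d)))) : (ℝ × ℝ × ℝ) × (EuclideanSpace ℝ (Fin d)))
        + t • ((((0:ℝ),(1:ℝ),(0:ℝ)), (0:(EuclideanSpace ℝ (Fin d)))) : (ℝ × ℝ × ℝ) × (EuclideanSpace ℝ (Fin d)))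
        + u • ((((0:ℝ),(0:ℝ),(1:ℝ)), (0:(EuclideanSpace ℝ (Fin d)))) : (ℝ × ℝ × ℝ) × (EuclideanSpace ℝ (Fin d))) := by
    simp [Prod.ext_iff]
  have hLval : L (q - q₀)
      = s • L ((((1:ℝ),(0:ℝ),(0:ℝ)), (0:(EuclideanSpace ℝ (Fin d)))))
        + t • fderiv ℝ w x (v x)
        + u • L ((((0:ℝ),(0:ℝ),(1:ℝ)), (0:(EuclideanSpace ℝ (Fin d))))) := by
    rw [hqq₀, hdecomp]
    rw [map_add, map_add, map_smul, map_smul, map_smul]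
    rw [hL, hq₀, hGdef, flowG_fderiv_t hw hφ hψ hφ0 hψ0 hφt hψt x]
  -- bound the unit vectors' images
  have hLnorm : ‖L‖ ≤ M := by
    refine le_trans ?_ (le_max_left M₀ 0)
    exact hM₀ x hx
  have hbasis : ∀ b : (ℝ × ℝ × ℝ) × (EuclideanSpace ℝ (Fin d)), ‖b‖ ≤ 1 → ‖L b‖ ≤ M := by
    intro b hb
    calc ‖L b‖ ≤ ‖L‖ * ‖b‖ := L.le_opNorm b
    _ ≤ M * 1 := by
        apply mul_le_mul hLnorm hb (norm_nonneg _) hMnn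
    _ = M := mul_one M
  have hb1 : ‖((((1:ℝ),(0:ℝ),(0:ℝ)), (0:(EuclideanSpace ℝ (Fin d)))) : (ℝ × ℝ × ℝ) × (EuclideanSpace ℝ (Fin d)))‖ ≤ 1 := by
    rw [Prod.norm_def, Prod.norm_def, Prod.norm_def]; simp
  have hb3 : ‖((((0:ℝ),(0:ℝ),(1:ℝ)), (0:(EuclideanSpace ℝ (Fin d)))) : (ℝ × ℝ × ℝ) × (EuclideanSpace ℝ (Fin d)))‖ ≤ 1 := by
    rw [Prod.norm_def, Prod.norm_def, Prod.norm_def]; simp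
  -- put everything together
  have hG₀ : G q₀ = v x := flowG_zero hφ0 hψ0 hφt x
  have hgoal : deriv (fun s' => φ u (ψ t (φ s' x))) s = G q := rfl
  rw [hgoal]
  have key : G q - v x - t • fderiv ℝ w x (v x)
      = (G q - G q₀ - L (q - q₀))
        + (s • L ((((1:ℝ),(0:ℝ),(0:ℝ)), (0:(EuclideanSpace ℝ (Fin d))))) + u • L ((((0:ℝ),(0:ℝ),(1:ℝ)), (0:(EuclideanSpace ℝ (Fin d)))))) := by
    rw [hG₀, hLval]; abel
  rw [key]
  have h1 : ‖G q - G q₀ - L (q - q₀)‖ ≤ (ε/4) * t :=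
    le_trans hmain (by nlinarith)
  have h2 : ‖s • L ((((1:ℝ),(0:ℝ),(0:ℝ)), (0:(EuclideanSpace ℝ (Fin d))))) + u • L ((((0:ℝ),(0:ℝ),(1:ℝ)), (0:(EuclideanSpace ℝ (Fin d)))))‖
      ≤ (s + u) * M := by
    calc ‖s • L ((((1:ℝ),(0:ℝ),(0:ℝ)), (0:(EuclideanSpace ℝ (Fin d))))) + u • L ((((0:ℝ),(0:ℝ),(1:ℝ)), (0:(EuclideanSpace ℝ (Fin d)))))‖
        ≤ ‖s • L ((((1:ℝ),(0:ℝ),(0:ℝ)), (0:(EuclideanSpace ℝ (Fin d)))))‖ + ‖u • L ((((0:ℝ),(0:ℝ),(1:ℝ)), (0:(EuclideanSpace ℝ (Fin d)))))‖ :=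
          norm_add_le _ _
      _ ≤ s * M + u * M := by
          rw [norm_smul, norm_smul, Real.norm_eq_abs, Real.norm_eq_abs,
            abs_of_nonneg hs, abs_of_nonneg hu]
          exact add_le_add (mul_le_mul_of_nonneg_left (hbasis _ hb1) hs)
            (mul_le_mul_of_nonneg_left (hbasis _ hb3) hu)
      _ = (s + u) * M := by ring
  have h3 : (s + u) * M ≤ (ε/2) * t := by
    have hγM : γ * (M + 1) ≤ ε/4 := by
      calc γ * (M+1) ≤ δ * (M+1) := by nlinarith
      _ ≤ (ε/(4*(M+1))) * (M+1) := by nlinarith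
      _ = ε/4 := by field_simp
    have hsu : s + u ≤ 2 * (γ * t) := by linarith
    calc (s + u) * M ≤ (2 * (γ * t)) * M := by nlinarith
    _ ≤ (ε/2) * t := by nlinarith [hγ.1.le, mul_nonneg hγ.1.le ht.le]
  calc ‖(G q - G q₀ - L (q - q₀)) + (s • L ((((1:ℝ),(0:ℝ),(0:ℝ)), (0:(EuclideanSpace ℝ (Fin d)))))
        + u • L ((((0:ℝ),(0:ℝ),(1:ℝ)), (0:(EuclideanSpace ℝ (Fin d))))))‖
      ≤ ‖G q - G q₀ - L (q - q₀)‖ + ‖s • L ((((1:ℝ),(0:ℝ),(0:ℝ)), (0:(EuclideanSpace ℝ (Fin d)))))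
        + u • L ((((0:ℝ),(0:ℝ),(1:ℝ)), (0:(EuclideanSpace ℝ (Fin d)))))‖ := norm_add_le _ _
    _ ≤ (ε/4) * t + (s + u) * M := add_le_add h1 h2
    _ ≤ (ε/4) * t + (ε/2) * t := by linarith
    _ ≤ ε * t := by nlinarith
end

section
/- Let μ be a finite Borel measure on ℝ^d and let (u_N)_{N ∈ ℕ} be a sequence of continuous nonnegative Lebesgue-integrable functions on ℝ^d such that: (a) for every N and every Borel set A, ∫_A u_N dLeb ≤ ∫_A u_{N+1} dLeb ≤ μ(A); and (b) the total variation distance between μ and the measure with density u_N tends to 0 as N → ∞. Then: (i) u_N(x) ≤ u_{N+1}(x) for every x ∈ ℝ^d and every N; (ii) the pointwise limit u(x) := lim_{N → ∞} u_N(x) ∈ [0, ∞] is a lower semicontinuous function; and (iii) μ is absolutely continuous with respect to Lebesgue measure with density u, i.e. μ(A) = ∫_A u dLeb for every Borel set A ⊆ ℝ^d. -/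
/-!
If `u N x > u (N + 1) x`, continuity yields an open neighbourhood of `x`, of positive Lebesgue
measure, on which `u N` exceeds `u (N + 1)` by a fixed margin, contradicting
`∫_A u_N ≤ ∫_A u_{N+1}`. The supremum of continuous functions is lower semicontinuous. By monotone
convergence `∫_A u = ⨆ N, ∫_A u_N ≤ μ A`, and convergence in total variation forces the gap
`μ A - ∫_A u_N` to tend to `0`.
-/

open MeasureTheory Filter Topology

theorem setLIntegral_ofReal_add_le_of_add_lt {X : Type*} [MeasurableSpace X] {μ : Measure X}
    {f g : X → ℝ} (hf : Measurable f) (hg0 : 0 ≤ g) {c : ℝ} (hc : 0 ≤ c) {V : Set X}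
    (hV : ∀ y ∈ V, g y + c < f y) :
    ∫⁻ y in V, ENNReal.ofReal (g y) ∂μ + ENNReal.ofReal c * μ V
      ≤ ∫⁻ y in V, ENNReal.ofReal (f y) ∂μ := by
  rw [← setLIntegral_const, ← lintegral_add_right _ measurable_const]
  refine setLIntegral_mono hf.ennreal_ofReal fun y hy => ?_
  rw [← ENNReal.ofReal_add (hg0 y) hc]
  exact ENNReal.ofReal_le_ofReal (hV y hy).le

theorem Continuous.le_of_forall_isOpen_setLIntegral_ofReal_le {X : Type*} [TopologicalSpace X]
    [MeasurableSpace X] [OpensMeasurableSpace X] {μ : Measure X} [μ.IsOpenPosMeasure]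
    [IsLocallyFiniteMeasure μ] {f g : X → ℝ} (hf : Continuous f) (hg : Continuous g)
    (hg0 : 0 ≤ g)
    (h : ∀ U, IsOpen U → ∫⁻ x in U, ENNReal.ofReal (f x) ∂μ ≤ ∫⁻ x in U, ENNReal.ofReal (g x) ∂μ) :
    f ≤ g := by
  intro x
  by_contra! hlt
  obtain ⟨W, hWx, hgW⟩ := hg.locallyIntegrable (μ := μ) x
  set c := (f x - g x) / 2
  have hc : 0 < c := by simp only [c]; linarith
  set V := interior W ∩ {y | g y + c < f y}
  have hVopen : IsOpen V := isOpen_interior.inter (isOpen_lt (hg.add continuous_const) hf)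
  have hxV : x ∈ V :=
    ⟨mem_interior_iff_mem_nhds.mpr hWx, by simp only [Set.mem_ofPred_eq, c]; linarith⟩
  have hfin : ∫⁻ y in V, ENNReal.ofReal (g y) ∂μ ≠ ⊤ :=
    ((hgW.mono_set (interior_subset.trans' Set.inter_subset_left)).setLIntegral_lt_top).ne
  have hzero : ENNReal.ofReal c * μ V ≤ 0 := by
    refine ENNReal.le_of_add_le_add_left hfin ?_
    rw [add_zero]
    exact (setLIntegral_ofReal_add_le_of_add_lt hf.measurable hg0 hc.le fun y hy => hy.2).trans
      (h V hVopen)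
  have hpos : 0 < ENNReal.ofReal c * μ V :=
    ENNReal.mul_pos (ENNReal.ofReal_pos.mpr hc).ne' (hVopen.measure_pos μ ⟨x, hxV⟩).ne'
  exact hpos.not_ge hzero

theorem ENNReal.eq_iSup_of_tendsto_tsub {ι : Type*} {l : Filter ι} [l.NeBot] {a : ι → ENNReal}
    {b : ENNReal} (hab : ∀ i, a i ≤ b) (h : Tendsto (fun i => b - a i) l (𝓝 0)) :
    b = ⨆ i, a i := by
  refine le_antisymm ?_ (iSup_le hab)
  have : b - ⨆ i, a i ≤ 0 := ge_of_tendsto' h fun i => tsub_le_tsub_left (le_iSup a i) b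
  exact tsub_eq_zero_iff_le.mp (nonpos_iff_eq_zero.mp this)

theorem lsc_density_of_monotone_tv_approximation_general
    (d : ℕ)
    (μ : Measure (EuclideanSpace ℝ (Fin d)))
    (u : ℕ → EuclideanSpace ℝ (Fin d) → ℝ)
    (hcont : ∀ N, Continuous (u N))
    (hnonneg : ∀ N x, 0 ≤ u N x)
    -- (a) monotone domination
    (hdom : ∀ N : ℕ, ∀ A : Set (EuclideanSpace ℝ (Fin d)), MeasurableSet A →
      (∫⁻ x in A, ENNReal.ofReal (u N x) ∂volume)
          ≤ (∫⁻ x in A, ENNReal.ofReal (u (N + 1) x) ∂volume) ∧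
      (∫⁻ x in A, ENNReal.ofReal (u (N + 1) x) ∂volume) ≤ μ A)
    -- (b) convergence in total variation
    (hTV : Tendsto
      (fun N => ⨆ (A : Set (EuclideanSpace ℝ (Fin d))) (_ : MeasurableSet A),
        ((μ A - ∫⁻ x in A, ENNReal.ofReal (u N x) ∂volume) ⊔
          ((∫⁻ x in A, ENNReal.ofReal (u N x) ∂volume) - μ A)))
      atTop (𝓝 0)) :
    -- (i) pointwise monotonicity
    (∀ N : ℕ, ∀ x, u N x ≤ u (N + 1) x) ∧
    -- (ii) the pointwise limit exists and is lower semicontinuous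
    (∀ x, Tendsto (fun N => ENNReal.ofReal (u N x)) atTop
        (𝓝 (⨆ N, ENNReal.ofReal (u N x)))) ∧
    LowerSemicontinuous (fun x => ⨆ N, ENNReal.ofReal (u N x)) ∧
    -- (iii) μ has density u with respect to Lebesgue measure
    (∀ A : Set (EuclideanSpace ℝ (Fin d)), MeasurableSet A →
      μ A = ∫⁻ x in A, (⨆ N, ENNReal.ofReal (u N x)) ∂volume) := by
  have hmono : ∀ N x, u N x ≤ u (N + 1) x := fun N =>
    (hcont N).le_of_forall_isOpen_setLIntegral_ofReal_le (hcont (N + 1)) (hnonneg (N + 1))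
      fun U hU => (hdom N U hU.measurableSet).1
  have hmonoE : Monotone fun N x => ENNReal.ofReal (u N x) :=
    monotone_nat_of_le_succ fun N x => ENNReal.ofReal_le_ofReal (hmono N x)
  refine ⟨hmono, fun x => tendsto_atTop_iSup fun _ _ h => hmonoE h x,
    lowerSemicontinuous_iSup fun N =>
      (ENNReal.continuous_ofReal.comp (hcont N)).lowerSemicontinuous,
    fun A hA => ?_⟩
  have hgap : Tendsto (fun N => μ A - ∫⁻ x in A, ENNReal.ofReal (u N x)) atTop (𝓝 0) :=
    tendsto_of_tendsto_of_tendsto_of_le_of_le tendsto_const_nhds hTV (fun _ => zero_le)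
      fun _ => le_iSup₂_of_le A hA le_sup_left
  rw [lintegral_iSup (fun N => (hcont N).measurable.ennreal_ofReal) hmonoE]
  exact ENNReal.eq_iSup_of_tendsto_tsub (fun N => (hdom N A hA).1.trans (hdom N A hA).2) hgap

/-- **Monotone approximation by continuous densities yields a lower semicontinuous
density.**  If `μ` is a finite Borel measure on `ℝ^d` and `(u N)` is a sequence of
continuous nonnegative integrable functions such that `∫_A u_N ≤ ∫_A u_{N+1} ≤ μ A`
for all Borel `A`, and the total variation distance between `μ` and `u_N · Leb`
tends to `0`, then `(u N)` is pointwise nondecreasing, its pointwise limit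
`u = ⨆ N, u N` (valued in `[0, ∞]`) is lower semicontinuous, and `μ = u · Leb`. -/
theorem lsc_density_of_monotone_tv_approximation
    (d : ℕ)
    (μ : Measure (EuclideanSpace ℝ (Fin d))) [IsFiniteMeasure μ]
    (u : ℕ → EuclideanSpace ℝ (Fin d) → ℝ)
    (hcont : ∀ N, Continuous (u N))
    (hnonneg : ∀ N x, 0 ≤ u N x)
    (hint : ∀ N, Integrable (u N) volume)
    -- (a) monotone domination
    (hdom : ∀ N : ℕ, ∀ A : Set (EuclideanSpace ℝ (Fin d)), MeasurableSet A →
      (∫⁻ x in A, ENNReal.ofReal (u N x) ∂volume)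
          ≤ (∫⁻ x in A, ENNReal.ofReal (u (N + 1) x) ∂volume) ∧
      (∫⁻ x in A, ENNReal.ofReal (u (N + 1) x) ∂volume) ≤ μ A)
    -- (b) convergence in total variation
    (hTV : Tendsto
      (fun N => ⨆ (A : Set (EuclideanSpace ℝ (Fin d))) (_ : MeasurableSet A),
        ((μ A - ∫⁻ x in A, ENNReal.ofReal (u N x) ∂volume) ⊔
          ((∫⁻ x in A, ENNReal.ofReal (u N x) ∂volume) - μ A)))
      atTop (𝓝 0)) :
    -- (i) pointwise monotonicity
    (∀ N : ℕ, ∀ x, u N x ≤ u (N + 1) x) ∧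
    -- (ii) the pointwise limit exists and is lower semicontinuous
    (∀ x, Tendsto (fun N => ENNReal.ofReal (u N x)) atTop
        (𝓝 (⨆ N, ENNReal.ofReal (u N x)))) ∧
    LowerSemicontinuous (fun x => ⨆ N, ENNReal.ofReal (u N x)) ∧
    -- (iii) μ has density u with respect to Lebesgue measure
    (∀ A : Set (EuclideanSpace ℝ (Fin d)), MeasurableSet A →
      μ A = ∫⁻ x in A, (⨆ N, ENNReal.ofReal (u N x)) ∂volume) :=
  lsc_density_of_monotone_tv_approximation_general d μ u hcont hnonneg hdom hTV
end

section
/- Let v¹, …, vⁿ : ℝ^d → ℝ^d be Lipschitz continuous vector fields and for each i let φⁱ : [0,∞) × ℝ^d → ℝ^d satisfy φⁱ(0, x) = x and ∂_t φⁱ(t, x) = vⁱ(φⁱ(t, x)) for all t ≥ 0, x ∈ ℝ^d. Let M ⊆ ℝ^d be a compact set which is forward invariant under each flow: φⁱ(t, x) ∈ M for every i, every x ∈ M and every t ≥ 0. Let λ₁, …, λₙ ≥ 0 with λ₁ + ⋯ + λₙ = 1, set v̄ = Σᵢ λᵢ vⁱ, and let φ̄ : [0,∞) × ℝ^d → ℝ^d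 satisfy φ̄(0, x) = x and ∂_t φ̄(t, x) = v̄(φ̄(t, x)) for all t ≥ 0, x ∈ ℝ^d. Then M is forward invariant under φ̄: φ̄(t, x) ∈ M for every x ∈ M and every t ≥ 0. -/
/-!
Say that maps `T h` are tangent to `M` if they send `M` into `M` up to an error `O(h²)`,
uniformly on `M`. For a Lipschitz field `w` and compact `M`, the flow of `w` is tangent to `M`
exactly when the Euler steps `p ↦ p + h • w p` are, and tangency of Euler steps passes to convex
combinations: following the flows of the `vⁱ` for times `λᵢ h` one after the other (Lie–Trotter
splitting) lands `O(h²)`-close to `p + h • v̄ p`. Finally a tangent flow leaves a closed set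
invariant: cutting `[0, t]` into `k` steps, the `k` local errors `O((t/k)²)` are amplified by at
most `exp (K t)`, so `φ̄ t x` lies within `O(1/k)` of `M` for every `k`.
-/

open Set Real
open scoped NNReal

theorem LipschitzWith.finset_sum {α ι F : Type*} [PseudoEMetricSpace α]
    [SeminormedAddCommGroup F] {s : Finset ι} {f : ι → α → F} {K : ι → ℝ≥0}
    (hf : ∀ i ∈ s, LipschitzWith (K i) (f i)) :
    LipschitzWith (∑ i ∈ s, K i) fun x => ∑ i ∈ s, f i x := by
  classical
  induction s using Finset.induction_on with
  | empty => simpa using LipschitzWith.const (0 : F)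
  | insert a s ha ih =>
    simp only [Finset.sum_insert ha]
    exact (hf a (Finset.mem_insert_self a s)).add
      (ih fun i hi => hf i (Finset.mem_insert_of_mem hi))

theorem gronwallBound_zero_le {K ε x : ℝ} (hK : 0 ≤ K) (hε : 0 ≤ ε) :
    gronwallBound 0 K ε x ≤ ε * x * exp (K * x) := by
  rcases hK.eq_or_lt with rfl | hK
  · simp [gronwallBound_K0]
  · have key : exp (K * x) - 1 ≤ K * x * exp (K * x) := by
      have h := one_sub_le_exp_neg (K * x)
      have h' : exp (-(K * x)) * exp (K * x) = 1 := by rw [← exp_add]; simp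
      nlinarith [exp_pos (K * x)]
    simp only [gronwallBound_of_K_ne_0 hK.ne', zero_mul, zero_add]
    rw [div_mul_eq_mul_div, div_le_iff₀ hK]
    nlinarith

section

variable {X : Type*} [PseudoMetricSpace X] {M : Set X}

/-- A quantitative tangency condition: for a flow it weakens forward invariance, and for
`eulerStep w` it says that `w` points into `M` up to second order. -/
def IsTangentTo (T : ℝ → X → X) (M : Set X) : Prop :=
  ∃ C ≥ (0 : ℝ), ∀ p ∈ M, ∀ h ∈ Icc (0 : ℝ) 1, ∃ q ∈ M, dist (T h p) q ≤ C * h ^ 2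

theorem IsTangentTo.of_dist_le {S T : ℝ → X → X} (hT : IsTangentTo T M) {D : ℝ} (hD0 : 0 ≤ D)
    (hD : ∀ p ∈ M, ∀ h ∈ Icc (0 : ℝ) 1, dist (S h p) (T h p) ≤ D * h ^ 2) :
    IsTangentTo S M := by
  obtain ⟨C, hC0, hC⟩ := hT
  refine ⟨D + C, by positivity, fun p hp h hh => ?_⟩
  obtain ⟨q, hq, hTq⟩ := hC p hp h hh
  refine ⟨q, hq, (dist_triangle _ (T h p) _).trans ?_⟩
  linarith [hD p hp h hh]

theorem IsForwardInvariant.isTangentTo {φ : ℝ → X → X} (hφ : IsForwardInvariant φ M) :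
    IsTangentTo φ M :=
  ⟨0, le_rfl, fun p hp h hh => ⟨φ h p, hφ hh.1 hp, by simp⟩⟩

end

section

variable {E : Type*} [NormedAddCommGroup E] [NormedSpace ℝ E]

def IsForwardSolution (w : E → E) (γ : ℝ → E) : Prop :=
  ∀ t ∈ Ici (0 : ℝ), HasDerivWithinAt γ (w (γ t)) (Ici 0) t

def IsForwardFlow (w : E → E) (φ : ℝ → E → E) : Prop :=
  (∀ x, φ 0 x = x) ∧ ∀ x, IsForwardSolution w (φ · x)

def eulerStep (w : E → E) (h : ℝ) (p : E) : E := p + h • w p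

variable {w : E → E} {K : ℝ≥0} {M : Set E}

theorem IsForwardSolution.continuousOn {γ : ℝ → E} (hγ : IsForwardSolution w γ) :
    ContinuousOn γ (Ici 0) :=
  fun t ht => (hγ t ht).continuousWithinAt

theorem IsForwardSolution.comp_const_add {γ : ℝ → E} (hγ : IsForwardSolution w γ) {c : ℝ}
    (hc : 0 ≤ c) : IsForwardSolution w fun t => γ (c + t) := by
  intro t ht
  have hshift : HasDerivWithinAt (fun s : ℝ => c + s) 1 (Ici 0) t := by
    simpa using (hasDerivWithinAt_id t (Ici (0 : ℝ))).const_add c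
  have hmaps : MapsTo (fun s : ℝ => c + s) (Ici 0) (Ici 0) := fun s hs => by
    simp only [mem_Ici] at hs ⊢; linarith
  simpa [Function.comp_def] using (hγ (c + t) (hmaps ht)).scomp t hshift hmaps

theorem IsForwardSolution.dist_le (hw : LipschitzWith K w) {γ δ : ℝ → E}
    (hγ : IsForwardSolution w γ) (hδ : IsForwardSolution w δ) {t : ℝ} (ht : 0 ≤ t) :
    dist (γ t) (δ t) ≤ dist (γ 0) (δ 0) * exp (K * t) := by
  simpa using dist_le_of_trajectories_ODE (v := fun _ => w) (fun _ => hw)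
    (hγ.continuousOn.mono Icc_subset_Ici_self)
    (fun s hs => (hγ s hs.1).mono (Ici_subset_Ici.2 hs.1))
    (hδ.continuousOn.mono Icc_subset_Ici_self)
    (fun s hs => (hδ s hs.1).mono (Ici_subset_Ici.2 hs.1)) le_rfl t ⟨ht, le_rfl⟩

theorem IsForwardFlow.dist_eulerStep_le {φ : ℝ → E → E} (hw : LipschitzWith K w)
    (hφ : IsForwardFlow w φ) (x : E) {h : ℝ} (hh : 0 ≤ h) :
    dist (φ h x) (eulerStep w h x) ≤ K * ‖w x‖ * h ^ 2 * exp (K * h) := by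
  have hγ := hφ.2 x
  have hgronwall : ∀ t ∈ Icc (0 : ℝ) h, ‖φ t x - eulerStep w t x‖ ≤
      gronwallBound 0 K (K * h * ‖w x‖) (t - 0) := by
    refine norm_le_gronwallBound_of_norm_deriv_right_le (f' := fun t => w (φ t x) - w x)
      ((hγ.continuousOn.mono Icc_subset_Ici_self).sub (by unfold eulerStep; fun_prop))
      (fun t ht => ?_) (by simp [eulerStep, hφ.1]) (fun t ht => ?_)
    · have hline : HasDerivWithinAt (fun s => x + s • w x) (w x) (Ici t) t := by
        simpa using ((hasDerivAt_id t).smul_const (w x)).hasDerivWithinAt.const_add x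
      exact ((hγ t ht.1).mono (Ici_subset_Ici.2 ht.1)).sub hline
    · have hmove : ‖φ t x - x‖ ≤ ‖φ t x - eulerStep w t x‖ + h * ‖w x‖ := by
        calc ‖φ t x - x‖ = ‖(φ t x - eulerStep w t x) + t • w x‖ := by
              unfold eulerStep; congr 1; abel
          _ ≤ ‖φ t x - eulerStep w t x‖ + t * ‖w x‖ := by
              grw [norm_add_le, norm_smul, Real.norm_of_nonneg ht.1]
          _ ≤ ‖φ t x - eulerStep w t x‖ + h * ‖w x‖ := by
              gcongr; exact ht.2.le
      calc ‖w (φ t x) - w x‖ ≤ K * ‖φ t x - x‖ := by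
            simpa [dist_eq_norm] using hw.dist_le_mul (φ t x) x
        _ ≤ K * (‖φ t x - eulerStep w t x‖ + h * ‖w x‖) := by gcongr
        _ = K * ‖φ t x - eulerStep w t x‖ + K * h * ‖w x‖ := by ring
  calc dist (φ h x) (eulerStep w h x) ≤ gronwallBound 0 K (K * h * ‖w x‖) h := by
        simpa [dist_eq_norm] using hgronwall h ⟨hh, le_rfl⟩
    _ ≤ K * h * ‖w x‖ * h * exp (K * h) := gronwallBound_zero_le K.2 (by positivity)
    _ = K * ‖w x‖ * h ^ 2 * exp (K * h) := by ring

theorem isTangentTo_eulerStep_smul (hw : IsTangentTo (eulerStep w) M) {c : ℝ}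
    (hc : c ∈ Icc (0 : ℝ) 1) : IsTangentTo (eulerStep fun p => c • w p) M := by
  obtain ⟨C, hC0, hC⟩ := hw
  refine ⟨C, hC0, fun p hp h hh => ?_⟩
  obtain ⟨q, hq, hdist⟩ := hC p hp (h * c) ⟨mul_nonneg hh.1 hc.1, mul_le_one₀ hh.2 hc.1 hc.2⟩
  refine ⟨q, hq, ?_⟩
  calc dist (eulerStep (fun p => c • w p) h p) q = dist (eulerStep w (h * c) p) q := by
        simp only [eulerStep, smul_smul]
    _ ≤ C * (h * c) ^ 2 := hdist
    _ ≤ C * h ^ 2 := by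
        have := hh.1
        have := mul_nonneg hh.1 hc.1
        gcongr
        exact mul_le_of_le_one_right hh.1 hc.2

/-- Composing the steps along `w` and then along `u` costs an extra error
`h ‖u q - u p‖ = O(h²)`, since the first step moves `p` by `O(h)`. -/
theorem isTangentTo_eulerStep_add {u : E → E} (hM : IsCompact M)
    (hu : IsTangentTo (eulerStep u) M) (hu' : LipschitzWith K u)
    (hw : IsTangentTo (eulerStep w) M) (hw' : ContinuousOn w M) :
    IsTangentTo (eulerStep fun p => u p + w p) M := by
  obtain ⟨Cu, hCu0, hCu⟩ := hu
  obtain ⟨Cw, hCw0, hCw⟩ := hw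
  obtain ⟨B, hB0, hB⟩ := (hM.image_of_continuousOn hw').isBounded.exists_pos_norm_le
  refine ⟨Cw + Cu + K * (B + Cw), by positivity, fun p hp h hh => ?_⟩
  obtain ⟨q, hq, hpq⟩ := hCw p hp h hh
  obtain ⟨q', hq', hqq'⟩ := hCu q hq h hh
  have h0 := hh.1
  have hmove : dist p q ≤ (B + Cw) * h := by
    calc dist p q ≤ dist p (eulerStep w h p) + dist (eulerStep w h p) q := dist_triangle _ _ _
      _ ≤ h * B + Cw * h ^ 2 := by
          grw [hpq]
          simp only [eulerStep, dist_self_add_right, norm_smul, Real.norm_of_nonneg h0]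
          grw [hB _ (mem_image_of_mem w hp)]
      _ ≤ (B + Cw) * h := by nlinarith [mul_le_mul_of_nonneg_left hh.2 (mul_nonneg hCw0 h0)]
  have hlip : ‖h • (u p - u q)‖ ≤ h * (K * ((B + Cw) * h)) := by
    rw [norm_smul, Real.norm_of_nonneg h0, ← dist_eq_norm]
    grw [hu'.dist_le_mul, hmove]
  refine ⟨q', hq', ?_⟩
  have hsplit : eulerStep (fun p => u p + w p) h p - q'
      = (eulerStep w h p - q) + (eulerStep u h q - q') + h • (u p - u q) := by
    simp only [eulerStep, smul_add, smul_sub]; abel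
  rw [dist_eq_norm, hsplit]
  calc _ ≤ ‖eulerStep w h p - q‖ + ‖eulerStep u h q - q'‖ + ‖h • (u p - u q)‖ := norm_add₃_le
    _ ≤ Cw * h ^ 2 + Cu * h ^ 2 + h * (K * ((B + Cw) * h)) := by
        rw [← dist_eq_norm, ← dist_eq_norm]; grw [hpq, hqq', hlip]
    _ = (Cw + Cu + K * (B + Cw)) * h ^ 2 := by ring

theorem isTangentTo_eulerStep_sum {ι : Type*} (hM : IsCompact M) {s : Finset ι}
    {f : ι → E → E} {K : ι → ℝ≥0} {c : ι → ℝ} (hf : ∀ i ∈ s, LipschitzWith (K i) (f i))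
    (hT : ∀ i ∈ s, IsTangentTo (eulerStep (f i)) M) (hc : ∀ i ∈ s, c i ∈ Icc (0 : ℝ) 1) :
    IsTangentTo (eulerStep fun p => ∑ i ∈ s, c i • f i p) M := by
  classical
  induction s using Finset.induction_on with
  | empty => exact ⟨0, le_rfl, fun p hp h _ => ⟨p, hp, by simp [eulerStep]⟩⟩
  | insert a s ha ih =>
    simp only [Finset.sum_insert ha]
    have hsum : Continuous fun p => ∑ i ∈ s, c i • f i p :=
      continuous_finsetSum s fun i hi =>
        continuous_const.smul (hf i (Finset.mem_insert_of_mem hi)).continuous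
    exact isTangentTo_eulerStep_add hM
      (isTangentTo_eulerStep_smul (hT a (s.mem_insert_self a)) (hc a (s.mem_insert_self a)))
      ((lipschitzWith_smul (c a)).comp (hf a (s.mem_insert_self a)))
      (ih (fun i hi => hf i (Finset.mem_insert_of_mem hi))
        (fun i hi => hT i (Finset.mem_insert_of_mem hi))
        (fun i hi => hc i (Finset.mem_insert_of_mem hi)))
      hsum.continuousOn

theorem IsForwardFlow.exists_dist_eulerStep_le {φ : ℝ → E → E} (hw : LipschitzWith K w)
    (hφ : IsForwardFlow w φ) (hM : IsCompact M) :
    ∃ D ≥ (0 : ℝ), ∀ p ∈ M, ∀ h ∈ Icc (0 : ℝ) 1, dist (φ h p) (eulerStep w h p) ≤ D * h ^ 2 := by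
  obtain ⟨B, hB0, hB⟩ :=
    (hM.image_of_continuousOn hw.continuous.continuousOn).isBounded.exists_pos_norm_le
  refine ⟨K * B * exp K, by positivity, fun p hp h hh => ?_⟩
  calc dist (φ h p) (eulerStep w h p) ≤ K * ‖w p‖ * h ^ 2 * exp (K * h) :=
        hφ.dist_eulerStep_le hw p hh.1
    _ ≤ K * B * h ^ 2 * exp (K * 1) := by
        gcongr
        exacts [hB _ (mem_image_of_mem w hp), hh.2]
    _ = K * B * exp K * h ^ 2 := by ring_nf

theorem IsForwardFlow.isTangentTo_iff_eulerStep {φ : ℝ → E → E} (hw : LipschitzWith K w)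
    (hφ : IsForwardFlow w φ) (hM : IsCompact M) :
    IsTangentTo φ M ↔ IsTangentTo (eulerStep w) M := by
  obtain ⟨D, hD0, hD⟩ := hφ.exists_dist_eulerStep_le hw hM
  exact ⟨fun h => h.of_dist_le hD0 fun p hp h hh => dist_comm (φ h p) _ ▸ hD p hp h hh,
    fun h => h.of_dist_le hD0 hD⟩

theorem IsForwardFlow.exists_forall_dist_le {φ : ℝ → E → E} (hw : LipschitzWith K w)
    (hφ : IsForwardFlow w φ) (hT : IsTangentTo φ M) :
    ∃ C ≥ (0 : ℝ), ∀ x ∈ M, ∀ h ∈ Icc (0 : ℝ) 1, ∀ k : ℕ,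
      ∃ p ∈ M, dist (φ (k * h) x) p ≤ C * k * h ^ 2 * exp (K * (k * h)) := by
  obtain ⟨C, hC0, hC⟩ := hT
  refine ⟨C, hC0, fun x hx h hh k => ?_⟩
  induction k with
  | zero => exact ⟨x, hx, by simp [hφ.1]⟩
  | succ k ih =>
    obtain ⟨p, hp, hdist⟩ := ih
    obtain ⟨q, hq, hstep⟩ := hC p hp h hh
    have hkh : 0 ≤ (k : ℝ) * h := mul_nonneg k.cast_nonneg hh.1
    have hcontract : dist (φ (k * h + h) x) (φ h p) ≤ dist (φ (k * h) x) p * exp (K * h) := by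
      simpa [hφ.1] using ((hφ.2 x).comp_const_add hkh).dist_le hw (hφ.2 p) hh.1
    have hgrowth : 1 ≤ exp (K * (k * h)) * exp (K * h) := by
      rw [← exp_add]; exact one_le_exp (by have := hh.1; positivity)
    refine ⟨q, hq, ?_⟩
    calc dist (φ ((k + 1 : ℕ) * h) x) q
        ≤ dist (φ (k * h + h) x) (φ h p) + dist (φ h p) q := by
          push_cast; rw [add_one_mul]; exact dist_triangle _ _ _
      _ ≤ C * k * h ^ 2 * exp (K * (k * h)) * exp (K * h) + C * h ^ 2 := by
          grw [hcontract, hdist, hstep]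
      _ ≤ C * (k + 1 : ℕ) * h ^ 2 * exp (K * ((k + 1 : ℕ) * h)) := by
          push_cast
          rw [add_one_mul, mul_add (K : ℝ), exp_add]
          nlinarith [mul_le_mul_of_nonneg_left hgrowth (mul_nonneg hC0 (sq_nonneg h))]

theorem IsForwardFlow.isForwardInvariant_of_isTangentTo {φ : ℝ → E → E} (hw : LipschitzWith K w)
    (hφ : IsForwardFlow w φ) (hM : IsClosed M) (hT : IsTangentTo φ M) :
    IsForwardInvariant φ M := by
  obtain ⟨C, hC0, hC⟩ := hφ.exists_forall_dist_le hw hT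
  intro t ht x hx
  rw [← hM.closure_eq, Metric.mem_closure_iff]
  intro ε hε
  obtain ⟨k, hk⟩ := exists_nat_gt (max t (C * t ^ 2 * exp (K * t) / ε))
  have hk0 : (0 : ℝ) < k := (le_max_of_le_left ht).trans_lt hk
  obtain ⟨p, hp, hdist⟩ := hC x hx (t / k)
    ⟨by positivity, div_le_one_of_le₀ (le_max_left _ _ |>.trans hk.le) hk0.le⟩ k
  rw [mul_div_cancel₀ t hk0.ne'] at hdist
  refine ⟨p, hp, hdist.trans_lt ?_⟩
  calc C * k * (t / k) ^ 2 * exp (K * t) = C * t ^ 2 * exp (K * t) / k := by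
        field_simp
    _ < ε := by
        rw [div_lt_iff₀ hk0, mul_comm ε]
        exact (div_lt_iff₀ hε).1 ((le_max_right _ _).trans_lt hk)

end

/-- **Forward invariance under the averaged vector field.**
If a compact set `M ⊆ ℝ^d` is forward invariant under the flows of Lipschitz vector
fields `v 0, …, v (n-1)`, and `v̄ = Σ λᵢ vⁱ` is a convex combination of them, then `M`
is forward invariant under the flow of `v̄`. -/
theorem forward_invariance_of_averaged_flow
    (d n : ℕ)
    (v : Fin n → EuclideanSpace ℝ (Fin d) → EuclideanSpace ℝ (Fin d))
    (hv : ∀ i, ∃ L : NNReal, LipschitzWith L (v i))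
    (φ : Fin n → ℝ → EuclideanSpace ℝ (Fin d) → EuclideanSpace ℝ (Fin d))
    (hφ0 : ∀ i x, φ i 0 x = x)
    (hφt : ∀ i x, ∀ t ∈ Ici (0 : ℝ),
      HasDerivWithinAt (fun t' => φ i t' x) (v i (φ i t x)) (Ici (0 : ℝ)) t)
    (M : Set (EuclideanSpace ℝ (Fin d))) (hMc : IsCompact M)
    (hMinv : ∀ i, ∀ x ∈ M, ∀ t ≥ (0 : ℝ), φ i t x ∈ M)
    (lam : Fin n → ℝ) (hlam0 : ∀ i, 0 ≤ lam i) (hlam1 : ∑ i, lam i = 1)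
    (vbar : EuclideanSpace ℝ (Fin d) → EuclideanSpace ℝ (Fin d))
    (hvbar : ∀ x, vbar x = ∑ i, lam i • v i x)
    (φbar : ℝ → EuclideanSpace ℝ (Fin d) → EuclideanSpace ℝ (Fin d))
    (hφbar0 : ∀ x, φbar 0 x = x)
    (hφbart : ∀ x, ∀ t ∈ Ici (0 : ℝ),
      HasDerivWithinAt (fun t' => φbar t' x) (vbar (φbar t x)) (Ici (0 : ℝ)) t) :
    ∀ x ∈ M, ∀ t ≥ (0 : ℝ), φbar t x ∈ M := by
  choose K hK using hv
  have hvbar' : vbar = fun x => ∑ i, lam i • v i x := funext hvbar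
  have hflow : IsForwardFlow vbar φbar := ⟨hφbar0, hφbart⟩
  have hlip : LipschitzWith (∑ i, ‖lam i‖₊ * K i) vbar :=
    hvbar' ▸ LipschitzWith.finset_sum fun i _ => (lipschitzWith_smul (lam i)).comp (hK i)
  have hlam : ∀ i ∈ Finset.univ, lam i ∈ Icc (0 : ℝ) 1 := fun i _ =>
    ⟨hlam0 i, hlam1 ▸ Finset.single_le_sum (fun j _ => hlam0 j) (Finset.mem_univ i)⟩
  have htangent : ∀ i ∈ Finset.univ, IsTangentTo (eulerStep (v i)) M := fun i _ =>
    (IsForwardFlow.isTangentTo_iff_eulerStep (hK i) ⟨hφ0 i, hφt i⟩ hMc).1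
      (IsForwardInvariant.isTangentTo fun t ht x hx => hMinv i x hx t ht)
  have htangent_bar : IsTangentTo (eulerStep vbar) M :=
    hvbar' ▸ isTangentTo_eulerStep_sum hMc (fun i _ => hK i) htangent hlam
  intro x hx t ht
  exact hflow.isForwardInvariant_of_isTangentTo hlip hMc.isClosed
    ((hflow.isTangentTo_iff_eulerStep hlip hMc).2 htangent_bar) ht hx
end
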